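/- arXiv:2201.05075 — 10 statements merged into one kernel-verified Lean document; each statement's English description precedes it below -/
import Mathlib

section
/- For every n ≥ 2, the Černý automaton C_n is completely reachable: every nonempty subset of its state set {0, 1, …, n−1} equals {0,…,n−1}·w for some word w over {a, b}. -/
open Finset

/-- The action of a word (list of letters) on a state, applying letters left to right. -/
def act {Q A : Type*} (δ : Q → A → Q) (q : Q) (w : List A) : Q := w.foldl δ q

/-- The image of a set of states under the action of a word. -/
def img {Q A : Type*} [DecidableEq Q] (δ : Q → A → Q) (P : Finset Q) (w : List A) : Finset Q :=
  P.image (fun q => act δ q w)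

/-- `excl δ w = Q \ Q·w`. -/
def excl {Q A : Type*} [Fintype Q] [DecidableEq Q] (δ : Q → A → Q) (w : List A) : Finset Q :=
  Finset.univ \ img δ Finset.univ w

/-- `dupl δ w` : the set of states with at least two preimages under the action of `w`. -/
def dupl {Q A : Type*} [Fintype Q] [DecidableEq Q] (δ : Q → A → Q) (w : List A) : Finset Q :=
  Finset.univ.filter (fun p => ∃ q₁ q₂ : Q, q₁ ≠ q₂ ∧ act δ q₁ w = p ∧ act δ q₂ w = p)

/-- A DFA is completely reachable if every nonempty subset of states is the image of the
full state set under the action of some word. -/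
def CompletelyReachable {Q A : Type*} [Fintype Q] [DecidableEq Q] (δ : Q → A → Q) : Prop :=
  ∀ P : Finset Q, P.Nonempty → ∃ w : List A, img δ Finset.univ w = P

/-- The transition function of the Černý automaton `C_n`: the letter `false` (= a) sends
0 to 1 and fixes the other states; the letter `true` (= b) adds 1 modulo n. -/
def cernyδ (n : ℕ) (hn : 2 ≤ n) (q : Fin n) (x : Bool) : Fin n :=
  if x then ⟨(q.val + 1) % n, Nat.mod_lt _ (by omega)⟩
  else if q.val = 0 then ⟨1, by omega⟩ else q

/-!
Reachable sets are built downwards in size. Given a nonempty proper subset `P` of `ℤ/n`, pick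
`s ∈ P` with `s - 1 ∉ P` and rotate `P` by `1 - s`, so that it contains `1` but not `0`. Adding
`0` to the rotated set gives a set of size `|P| + 1` which `a` maps onto the rotated set (it merges
`0` into `1` and fixes everything else), and a power of `b` rotates that back to `P`.
-/

section Reachability

variable {Q A : Type*} [DecidableEq Q] (δ : Q → A → Q)

theorem img_nil (P : Finset Q) : img δ P [] = P := by
  simp [img, act]

theorem img_append (P : Finset Q) (u v : List A) :
    img δ P (u ++ v) = img δ (img δ P u) v := by
  simp [img, act, List.foldl_append, Finset.image_image, Function.comp_def]

variable [Fintype Q]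

theorem completelyReachable_of_exists_card_lt
    (h : ∀ P : Finset Q, P.Nonempty → P ≠ univ →
      ∃ R : Finset Q, ∃ w : List A, P.card < R.card ∧ img δ R w = P) :
    CompletelyReachable δ := by
  suffices ∀ k : ℕ, ∀ P : Finset Q, P.Nonempty → Fintype.card Q ≤ P.card + k →
      ∃ w : List A, img δ univ w = P from
    fun P hP => this (Fintype.card Q) P hP (by omega)
  intro k
  induction k with
  | zero =>
    intro P _ hcard
    exact ⟨[], by rw [img_nil, eq_univ_of_card P (le_antisymm (card_le_univ P) hcard)]⟩
  | succ k ih =>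
    intro P hP hcard
    by_cases hPu : P = univ
    · exact ⟨[], by rw [img_nil, hPu]⟩
    obtain ⟨R, v, hlt, hRv⟩ := h P hP hPu
    obtain ⟨u, hu⟩ := ih R (card_pos.mp (by omega)) (by omega)
    exact ⟨u ++ v, by rw [img_append, hu, hRv]⟩

end Reachability

section Cerny

open Fin.CommRing

variable {n : ℕ} (hn : 2 ≤ n) [NeZero n]

theorem cernyδ_true (q : Fin n) : cernyδ n hn q true = q + 1 := by
  ext
  simp [cernyδ, Fin.val_add, Nat.mod_eq_of_lt (show 1 < n by omega)]

theorem cernyδ_false (q : Fin n) : cernyδ n hn q false = if q = 0 then 1 else q := by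
  ext
  by_cases hq : q = 0
  · simp [cernyδ, hq, Nat.mod_eq_of_lt (show 1 < n by omega)]
  · simp [cernyδ, hq, Fin.val_ne_zero_iff.mpr hq]

theorem act_cernyδ_replicate_true (q : Fin n) (m : ℕ) :
    act (cernyδ n hn) q (List.replicate m true) = q + m := by
  induction m generalizing q with
  | zero => simp [act]
  | succ m ih =>
    rw [List.replicate_succ]
    change act (cernyδ n hn) (cernyδ n hn q true) (List.replicate m true) = _
    rw [ih, cernyδ_true]
    push_cast
    ring

theorem img_cernyδ_replicate_true (P : Finset (Fin n)) (m : ℕ) :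
    img (cernyδ n hn) P (List.replicate m true) = P.image (· + (m : Fin n)) := by
  simp only [img, act_cernyδ_replicate_true]

theorem img_cernyδ_false_insert_zero {S : Finset (Fin n)} (h1 : 1 ∈ S) (h0 : 0 ∉ S) :
    img (cernyδ n hn) (insert 0 S) [false] = S := by
  have hfix : ∀ q ∈ S, cernyδ n hn q false = q := fun q hq => by
    rw [cernyδ_false, if_neg (ne_of_mem_of_not_mem hq h0)]
  simp only [img, act, List.foldl_cons, List.foldl_nil, image_insert]
  rw [image_congr hfix, image_id', cernyδ_false, if_pos rfl, insert_eq_of_mem h1]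

theorem Fin.exists_mem_sub_one_notMem {P : Finset (Fin n)} (hP : P.Nonempty) (hPu : P ≠ univ) :
    ∃ s ∈ P, s - 1 ∉ P := by
  by_contra! hclosed
  obtain ⟨p, hp⟩ := hP
  have hsub : ∀ k : ℕ, p - k ∈ P := by
    intro k
    induction k with
    | zero => simpa using hp
    | succ k ih => simpa [sub_add_eq_sub_sub] using hclosed _ ih
  refine hPu (eq_univ_of_forall fun t => ?_)
  simpa using hsub (p - t).val

theorem cernyδ_exists_card_lt {P : Finset (Fin n)} (hP : P.Nonempty) (hPu : P ≠ univ) :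
    ∃ R : Finset (Fin n), ∃ w : List Bool, P.card < R.card ∧ img (cernyδ n hn) R w = P := by
  obtain ⟨s, hs, hs1⟩ := Fin.exists_mem_sub_one_notMem hP hPu
  set S := P.image (· + (1 - s))
  have h1 : 1 ∈ S := mem_image.mpr ⟨s, hs, by ring⟩
  have h0 : 0 ∉ S := by
    intro hS
    obtain ⟨q, hq, hq0⟩ := mem_image.mp hS
    obtain rfl : q = s - 1 := by linear_combination hq0
    exact hs1 hq
  refine ⟨insert 0 S, false :: List.replicate (s - 1 : Fin n).val true, ?_, ?_⟩
  · rw [card_insert_of_notMem h0, card_image_of_injective _ (add_left_injective _)]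
    omega
  · rw [← List.singleton_append, img_append, img_cernyδ_false_insert_zero hn h1 h0,
      img_cernyδ_replicate_true, Fin.cast_val_eq_self, image_image]
    convert image_id (s := P)
    funext q
    simp only [Function.comp_apply, id]
    ring

end Cerny

/-- For every n ≥ 2, the Černý automaton C_n is completely reachable. -/
theorem cerny_completelyReachable (n : ℕ) (hn : 2 ≤ n) :
    CompletelyReachable (cernyδ n hn) := by
  have : NeZero n := ⟨by omega⟩
  exact completelyReachable_of_exists_card_lt _ fun _ hP hPu => cernyδ_exists_card_lt hn hP hPu
end

section
/- Let A = ⟨Q, Σ⟩ be a DFA. If the directed graph Γ₁(A) is strongly connected, then A is completely reachable. -/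
open Finset

/-- The edge relation of the graph Γ₁(A): there is an edge from p to q iff some word w of
defect 1 has excluded state p and duplicate state q. -/
def gamma1Edge {Q A : Type*} [Fintype Q] [DecidableEq Q] (δ : Q → A → Q) (p q : Q) : Prop :=
  ∃ w : List A, excl δ w = {p} ∧ dupl δ w = {q}

lemma cross_edge {Q : Type*} {r : Q → Q → Prop} {P : Finset Q} [DecidableEq Q] {a b : Q}
    (h : Relation.ReflTransGen r a b) :
    a ∉ P → b ∈ P → ∃ p q, p ∉ P ∧ q ∈ P ∧ r p q := by
  induction h with
  | refl => intro ha hb; exact absurd hb ha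
  | @tail b c hab hbc ih =>
    intro ha hc
    by_cases hm : b ∈ P
    · exact ih ha hm
    · exact ⟨_, _, hm, hc, hbc⟩

/-- If the graph Γ₁(A) is strongly connected then A is completely reachable. -/
theorem gamma1_stronglyConnected_completelyReachable {Q A : Type*} [Fintype Q] [DecidableEq Q]
    [Nonempty Q] [Fintype A] (δ : Q → A → Q)
    (h : ∀ p q : Q, Relation.ReflTransGen (gamma1Edge δ) p q) :
    CompletelyReachable δ := by
  intro P hP
  obtain ⟨k, hk⟩ : ∃ k, Fintype.card Q - P.card ≤ k := ⟨_, le_rfl⟩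
  induction k generalizing P with
  | zero =>
    have hcard : P.card = Fintype.card Q := by
      have := Finset.card_le_univ P
      omega
    have hPu : P = Finset.univ := Finset.eq_univ_of_card P hcard
    exact ⟨[], by simp [img, act, hPu, Finset.image_id]⟩
  | succ k ih =>
    by_cases hPu : P = Finset.univ
    · exact ⟨[], by simp [img, act, hPu, Finset.image_id]⟩
    · have hne : (Finset.univ \ P).Nonempty := by
        rw [Finset.sdiff_nonempty]
        exact fun hsub => hPu (Finset.univ_subset_iff.mp hsub)
      obtain ⟨p0, hp0⟩ := hne
      obtain ⟨q0, hq0⟩ := hP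
      have hp0' : p0 ∉ P := (Finset.mem_sdiff.mp hp0).2
      obtain ⟨p, q, hpP, hqP, ⟨w, hexcl, hdupl⟩⟩ := cross_edge (h p0 q0) hp0' hq0
      have hq : q ∈ dupl δ w := by rw [hdupl]; exact Finset.mem_singleton_self q
      obtain ⟨q1, q2, hq12, hq1, hq2⟩ := (Finset.mem_filter.mp hq).2
      set f : Q → Q := fun x => act δ x w with hf
      set P' : Finset Q := Finset.univ.filter (fun x => f x ∈ P) with hP'
      have hq1P' : q1 ∈ P' := by
        simp only [hP', Finset.mem_filter, Finset.mem_univ, true_and, hf, hq1]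
        exact hqP
      have hq2P' : q2 ∈ P' := by
        simp only [hP', Finset.mem_filter, Finset.mem_univ, true_and, hf, hq2]
        exact hqP
      -- every element of P has a preimage under f
      have hpre : ∀ x ∈ P, ∃ y, f y = x := by
        intro x hx
        by_contra hno
        push_neg at hno
        have hxni : x ∉ img δ Finset.univ w := by
          simp only [img, Finset.mem_image]
          rintro ⟨y, -, hy⟩
          exact hno y hy
        have : x ∈ excl δ w := Finset.mem_sdiff.mpr ⟨Finset.mem_univ x, hxni⟩
        rw [hexcl, Finset.mem_singleton] at this
        exact hpP (this ▸ hx)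
      have himgP' : img δ P' w = P := by
        ext x
        simp only [img, Finset.mem_image]
        constructor
        · rintro ⟨y, hy, rfl⟩
          exact (Finset.mem_filter.mp hy).2
        · intro hx
          obtain ⟨y, hy⟩ := hpre x hx
          exact ⟨y, Finset.mem_filter.mpr ⟨Finset.mem_univ y, by rw [hy]; exact hx⟩, hy⟩
      -- image of P'.erase q1 is still P
      have himg2 : (P'.erase q1).image f = P := by
        apply Finset.Subset.antisymm
        · intro x hx
          obtain ⟨y, hy, rfl⟩ := Finset.mem_image.mp hx
          exact (Finset.mem_filter.mp (Finset.mem_of_mem_erase hy)).2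
        · intro x hx
          by_cases hxq : x = q
          · exact Finset.mem_image.mpr ⟨q2, Finset.mem_erase.mpr ⟨(Ne.symm hq12), hq2P'⟩,
              by rw [hf]; simp [hq2, hxq]⟩
          · obtain ⟨y, hy⟩ := hpre x hx
            have hyP' : y ∈ P' := Finset.mem_filter.mpr ⟨Finset.mem_univ y, by rw [hy]; exact hx⟩
            have hyq1 : y ≠ q1 := by
              rintro rfl
              exact hxq (by rw [← hy, hf]; exact hq1)
            exact Finset.mem_image.mpr ⟨y, Finset.mem_erase.mpr ⟨hyq1, hyP'⟩, hy⟩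
      have hcard : P.card + 1 ≤ P'.card := by
        have h1 : P.card ≤ (P'.erase q1).card := by
          rw [← himg2]; exact Finset.card_image_le
        have h2 : (P'.erase q1).card = P'.card - 1 := Finset.card_erase_of_mem hq1P'
        have h3 : 1 ≤ P'.card := Finset.card_pos.mpr ⟨q1, hq1P'⟩
        omega
      have hPcard : P'.card ≤ Fintype.card Q := by
        simpa [Finset.card_univ] using Finset.card_le_univ P'
      obtain ⟨u, hu⟩ := ih P' ⟨q1, hq1P'⟩ (by omega)
      refine ⟨u ++ w, ?_⟩
      have : img δ Finset.univ (u ++ w) = img δ (img δ Finset.univ u) w := by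
        simp only [img, Finset.image_image, act, List.foldl_append]
        rfl
      rw [this, hu, himgP']
end

section
/- Let A = ⟨Q, Σ⟩ be a DFA, let P be a nonempty proper subset of Q, and let w ∈ Σ* be a word such that excl(w) ∩ P = ∅ and dupl(w) ∩ P ≠ ∅. Then there exists a subset R ⊆ Q such that P = R·w and |R| > |P|. -/
open Finset

/-- If excl(w) is disjoint from P and dupl(w) meets P, then P is the image under w of a
strictly larger set R. -/
theorem exists_larger_preimage {Q A : Type*} [Fintype Q] [DecidableEq Q]
    (δ : Q → A → Q) (P : Finset Q) (hne : P.Nonempty) (hprop : P ≠ Finset.univ)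
    (w : List A) (h1 : excl δ w ∩ P = ∅) (h2 : (dupl δ w ∩ P).Nonempty) :
    ∃ R : Finset Q, img δ R w = P ∧ P.card < R.card := by
  classical
  set f : Q → Q := fun q => act δ q w with hf
  refine ⟨Finset.univ.filter (fun q => f q ∈ P), ?_, ?_⟩
  · apply Finset.Subset.antisymm
    · intro p hp
      simp only [img, Finset.mem_image, Finset.mem_filter] at hp
      obtain ⟨q, ⟨_, hq⟩, rfl⟩ := hp
      exact hq
    · intro p hp
      have hmem : p ∈ img δ Finset.univ w := by
        by_contra hcon
        have : p ∈ excl δ w ∩ P := by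
          simp [excl, hcon, hp]
        rw [h1] at this
        exact absurd this (Finset.notMem_empty p)
      simp only [img, Finset.mem_image] at hmem
      obtain ⟨q, _, hq⟩ := hmem
      simp only [img, Finset.mem_image, Finset.mem_filter]
      exact ⟨q, ⟨Finset.mem_univ q, by simp [hf, hq, hp]⟩, hq⟩
  · set R := Finset.univ.filter (fun q => f q ∈ P) with hR
    have himg : R.image f = P := by
      apply Finset.Subset.antisymm
      · intro p hp
        simp only [Finset.mem_image, hR, Finset.mem_filter] at hp
        obtain ⟨q, ⟨_, hq⟩, rfl⟩ := hp
        exact hq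
      · intro p hp
        have hmem : p ∈ img δ Finset.univ w := by
          by_contra hcon
          have : p ∈ excl δ w ∩ P := by
            simp [excl, hcon, hp]
          rw [h1] at this
          exact absurd this (Finset.notMem_empty p)
        simp only [img, Finset.mem_image] at hmem
        obtain ⟨q, _, hq⟩ := hmem
        exact Finset.mem_image.mpr ⟨q, by simp [hR, hf, hq, hp], hq⟩
    have hle : P.card ≤ R.card := himg ▸ Finset.card_image_le
    rcases lt_or_eq_of_le hle with h | h
    · exact h
    · exfalso
      have hinj : Set.InjOn f R := by
        rw [← Finset.card_image_iff, himg, h]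
      obtain ⟨p, hp⟩ := h2
      simp only [dupl, Finset.mem_inter, Finset.mem_filter] at hp
      obtain ⟨⟨_, q₁, q₂, hne12, hq1, hq2⟩, hpP⟩ := hp
      have h1m : q₁ ∈ R := by simp [hR, hf, hq1, hpP]
      have h2m : q₂ ∈ R := by simp [hR, hf, hq2, hpP]
      exact hne12 (hinj h1m h2m (by simp [hf, hq1, hq2]))
end

section
/- Let A = ⟨Q, Σ⟩ be a DFA. For all words u, v ∈ Σ*, dupl(uv) = {q ∈ Q : qv⁻¹ ∩ dupl(u) ≠ ∅ or |qv⁻¹ \ excl(u)| ≥ 2}, where qv⁻¹ := {p ∈ Q : p·v = q}. -/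
open Finset

/-- `preim δ v q` is the set of preimages of q under the action of the word v. -/
def preim {Q A : Type*} [Fintype Q] [DecidableEq Q] (δ : Q → A → Q) (v : List A) (q : Q) :
    Finset Q :=
  Finset.univ.filter (fun p => act δ p v = q)

/-- dupl(uv) = {q ∈ Q : q v⁻¹ ∩ dupl(u) ≠ ∅ or |q v⁻¹ \ excl(u)| ≥ 2}. -/
theorem dupl_append {Q A : Type*} [Fintype Q] [DecidableEq Q] (δ : Q → A → Q)
    (u v : List A) :
    dupl δ (u ++ v) = Finset.univ.filter
      (fun q => (preim δ v q ∩ dupl δ u).Nonempty ∨ 2 ≤ (preim δ v q \ excl δ u).card) := by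
  ext q
  simp only [dupl, preim, excl, img, mem_filter, mem_univ, true_and, Finset.Nonempty,
    mem_inter, mem_sdiff, mem_image, not_and, not_not]
  have hact : ∀ p : Q, act δ p (u ++ v) = act δ (act δ p u) v := fun p =>
    List.foldl_append ..
  constructor
  · rintro ⟨q₁, q₂, hne, h₁, h₂⟩
    rw [hact] at h₁ h₂
    by_cases hp : act δ q₁ u = act δ q₂ u
    · exact Or.inl ⟨act δ q₁ u, ⟨h₁, q₁, q₂, hne, rfl, hp.symm⟩⟩
    · right
      have hsub : {act δ q₁ u, act δ q₂ u} ⊆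
          Finset.univ.filter (fun p => act δ p v = q) \
            (Finset.univ \ Finset.univ.image (fun r => act δ r u)) := by
        intro x hx
        simp only [mem_insert, mem_singleton] at hx
        rcases hx with rfl | rfl <;>
          simp only [mem_sdiff, mem_filter, mem_univ, true_and, not_and, not_not,
            mem_image] <;>
          exact ⟨by assumption, ⟨_, rfl⟩⟩
      calc 2 = ({act δ q₁ u, act δ q₂ u} : Finset Q).card := (card_pair hp).symm
        _ ≤ _ := card_le_card hsub
  · rintro (⟨p, ⟨hpv, q₁, q₂, hne, h₁, h₂⟩⟩ | hcard)
    · exact ⟨q₁, q₂, hne, by rw [hact, h₁, hpv], by rw [hact, h₂, hpv]⟩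
    · obtain ⟨p₁, hp₁, p₂, hp₂, hpne⟩ := one_lt_card.mp hcard
      simp only [mem_sdiff, mem_filter, mem_univ, true_and, not_and, not_not,
        mem_image] at hp₁ hp₂
      obtain ⟨r₁, hr₁⟩ := hp₁.2
      obtain ⟨r₂, hr₂⟩ := hp₂.2
      refine ⟨r₁, r₂, fun h => hpne (by rw [← hr₁, ← hr₂, h]), ?_, ?_⟩ <;>
        rw [hact]
      · rw [hr₁, hp₁.1]
      · rw [hr₂, hp₂.1]
end

section
/- Let A = ⟨Q, Σ⟩ be a DFA. For all words u, u', v ∈ Σ*, if excl(u) = excl(u') and dupl(u) = dupl(u'), then excl(uv) = excl(u'v) and dupl(uv) = dupl(u'v). -/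
open Finset

/-- If two words have the same excluded and duplicate sets, then so do their products with
any common right factor. -/
theorem excl_dupl_append_congr {Q A : Type*} [Fintype Q] [DecidableEq Q] (δ : Q → A → Q)
    (u u' v : List A) (hexcl : excl δ u = excl δ u') (hdupl : dupl δ u = dupl δ u') :
    excl δ (u ++ v) = excl δ (u' ++ v) ∧ dupl δ (u ++ v) = dupl δ (u' ++ v) := by
  have himg : img δ Finset.univ u = img δ Finset.univ u' := by
    have h1 : Finset.univ \ excl δ u = img δ Finset.univ u := by
      simp [excl, Finset.sdiff_sdiff_self_left]
    have h2 : Finset.univ \ excl δ u' = img δ Finset.univ u' := by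
      simp [excl, Finset.sdiff_sdiff_self_left]
    rw [← h1, ← h2, hexcl]
  have hact : ∀ (w : List A) (q : Q), act δ q (w ++ v) = act δ (act δ q w) v := by
    intro w q; simp [act, List.foldl_append]
  have hsplit : ∀ w : List A, dupl δ (w ++ v) =
      Finset.univ.filter (fun p =>
        (∃ q ∈ dupl δ w, act δ q v = p) ∨
        (∃ q₁ ∈ img δ Finset.univ w, ∃ q₂ ∈ img δ Finset.univ w,
          q₁ ≠ q₂ ∧ act δ q₁ v = p ∧ act δ q₂ v = p)) := by
    intro w
    ext p
    simp only [dupl, Finset.mem_filter, Finset.mem_univ, true_and]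
    constructor
    · rintro ⟨r₁, r₂, hne, h1, h2⟩
      rw [hact] at h1 h2
      by_cases hs : act δ r₁ w = act δ r₂ w
      · left
        refine ⟨act δ r₁ w, ?_, h1⟩
        exact ⟨r₁, r₂, hne, rfl, hs.symm⟩
      · right
        refine ⟨act δ r₁ w, ?_, act δ r₂ w, ?_, hs, h1, h2⟩ <;>
          first
          | exact ⟨_, Finset.mem_univ _, rfl⟩
          | · simp only [img, Finset.mem_image]
              exact ⟨_, Finset.mem_univ _, rfl⟩
    · rintro (⟨q, hq, hqv⟩ | ⟨s₁, hs₁, s₂, hs₂, hne, h1, h2⟩)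
      · obtain ⟨r₁, r₂, hne, h1, h2⟩ := hq
        exact ⟨r₁, r₂, hne, by rw [hact, h1, hqv], by rw [hact, h2, hqv]⟩
      · simp only [img, Finset.mem_image, Finset.mem_univ, true_and] at hs₁ hs₂
        obtain ⟨r₁, hr₁⟩ := hs₁
        obtain ⟨r₂, hr₂⟩ := hs₂
        refine ⟨r₁, r₂, fun h => hne (by rw [← hr₁, ← hr₂, h]), ?_, ?_⟩
        · rw [hact, hr₁, h1]
        · rw [hact, hr₂, h2]
  constructor
  · simp only [excl]
    congr 1
    have : ∀ w : List A, img δ Finset.univ (w ++ v) = img δ (img δ Finset.univ w) v := by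
      intro w
      simp only [img, Finset.image_image]
      ext p
      simp [hact, Function.comp]
    rw [this, this, himg]
  · rw [hsplit, hsplit, himg, hdupl]
end

section
/- Let A = ⟨Q, Σ⟩ be a DFA with |Q| = n and let 1 ≤ k < n. Then the set XD_k(A) := {(excl(w), dupl(w)) : w ∈ Σ*, |excl(w)| = k} satisfies |XD_k(A)| ≤ C(n, k) · Σ_{d=1}^{min(k, n−k)} C(n−k, d), where C(·,·) denotes the binomial coefficient. Consequently, |XD_k(A)| < 2^k · C(n, k) if k ≥ n−k, and |XD_k(A)| < C(n, k)² if k < n−k. -/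
/-!
For a word `w` of defect `k`, the duplicated states lie in the image `Q·w = (excl w)ᶜ`, which has
`n - k` elements. Counting the fibres of `q ↦ q·w` gives `|Q·w| + |dupl w| ≤ n`, so
`|dupl w| ≤ k`, and `dupl w` is nonempty by pigeonhole since `k ≥ 1`. Hence `(excl w, dupl w)` is one
of the `C(n, k) · ∑_{d=1}^{min(k, n-k)} C(n-k, d)` pairs `(E, D)` with `|E| = k`, `D ⊆ Eᶜ` and
`1 ≤ |D| ≤ min(k, n-k)`. When `n - k ≤ k` the sum is `2^(n-k) - 1 < 2^k`; when `k < n - k` it is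
below `C(n, k)`, since in Vandermonde's `C(n, k) = ∑_d C(n-k, d) C(k, k-d)` the extra `d = 0`
term is `1`.
-/

open Finset

/-- `XD δ k` is the set of pairs (excl(w), dupl(w)) over all words w of defect k. -/
def XD {Q A : Type*} [Fintype Q] [DecidableEq Q] (δ : Q → A → Q) (k : ℕ) :
    Set (Finset Q × Finset Q) :=
  {p | ∃ w : List A, excl δ w = p.1 ∧ dupl δ w = p.2 ∧ (excl δ w).card = k}

theorem Finset.sum_range_succ_eq_add_sum_Icc_one {M : Type*} [AddCommMonoid M] (f : ℕ → M)
    (t : ℕ) : ∑ i ∈ range (t + 1), f i = f 0 + ∑ i ∈ Icc 1 t, f i := by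
  rw [range_eq_Ico, sum_eq_sum_Ico_succ_bot t.succ_pos]
  congr 2

theorem Nat.sum_Icc_one_choose (t : ℕ) : ∑ d ∈ Icc 1 t, t.choose d = 2 ^ t - 1 := by
  have := t.sum_range_choose
  rw [sum_range_succ_eq_add_sum_Icc_one, Nat.choose_zero_right] at this
  omega

theorem Nat.sum_Icc_one_choose_lt_add_choose (a k : ℕ) :
    ∑ d ∈ Icc 1 k, a.choose d < (a + k).choose k := by
  have hvandermonde : (a + k).choose k = 1 + ∑ d ∈ Icc 1 k, a.choose d * k.choose (k - d) := by
    rw [Nat.add_choose_eq,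
      Nat.sum_antidiagonal_eq_sum_range_succ (fun i j => a.choose i * k.choose j),
      sum_range_succ_eq_add_sum_Icc_one]
    simp
  have hle : ∑ d ∈ Icc 1 k, a.choose d ≤ ∑ d ∈ Icc 1 k, a.choose d * k.choose (k - d) :=
    sum_le_sum fun d _ => Nat.le_mul_of_pos_right _ (Nat.choose_pos (Nat.sub_le k d))
  omega

theorem Finset.card_filter_pos_add_card_filter_one_lt_le_sum {ι : Type*} (s : Finset ι)
    (f : ι → ℕ) : #{i ∈ s | 0 < f i} + #{i ∈ s | 1 < f i} ≤ ∑ i ∈ s, f i := by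
  rw [card_filter, card_filter, ← sum_add_distrib]
  refine sum_le_sum fun i _ => ?_
  split_ifs <;> omega

section Counting

variable {α : Type*} [Fintype α] [DecidableEq α]

def exclDuplPairs (k m : ℕ) : Finset (Finset α × Finset α) :=
  (powersetCard k univ).biUnion fun E =>
    ((Icc 1 m).biUnion fun d => powersetCard d Eᶜ).image (Prod.mk E)

theorem mem_exclDuplPairs {k m : ℕ} {E D : Finset α} :
    (E, D) ∈ exclDuplPairs k m ↔ #E = k ∧ D ⊆ Eᶜ ∧ 1 ≤ #D ∧ #D ≤ m := by
  simp only [exclDuplPairs, mem_biUnion, mem_image, mem_powersetCard, Prod.mk.injEq, mem_Icc]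
  grind

theorem card_exclDuplPairs (k m : ℕ) :
    #(exclDuplPairs (α := α) k m) =
      (Fintype.card α).choose k * ∑ d ∈ Icc 1 m, (Fintype.card α - k).choose d := by
  have houter : ((powersetCard k univ : Finset (Finset α)) : Set (Finset α)).PairwiseDisjoint
      fun E => ((Icc 1 m).biUnion fun d => powersetCard d Eᶜ).image (Prod.mk E) := by
    intro E _ E' _ hne
    simp only [Function.onFun, disjoint_left, mem_image]
    rintro _ ⟨D, -, rfl⟩ ⟨D', -, hD'⟩
    exact hne (congrArg Prod.fst hD').symm
  rw [exclDuplPairs, card_biUnion houter, ← card_univ, ← card_powersetCard, ← smul_eq_mul,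
    ← sum_const]
  refine sum_congr rfl fun E hE => ?_
  rw [card_image_of_injective _ (Prod.mk_right_injective E),
    card_biUnion ((pairwise_disjoint_powersetCard _).set_pairwise _)]
  simp [card_compl, mem_powersetCard_univ.mp hE]

end Counting

section Words

variable {Q A : Type*} [Fintype Q] [DecidableEq Q] (δ : Q → A → Q) (w : List A)

theorem mem_img_univ_iff_card_fiber_pos (p : Q) :
    p ∈ img δ univ w ↔ 0 < #{q | act δ q w = p} := by
  simp [img, card_pos, Finset.Nonempty]

theorem mem_dupl_iff_one_lt_card_fiber (p : Q) :
    p ∈ dupl δ w ↔ 1 < #{q | act δ q w = p} := by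
  simp only [dupl, one_lt_card_iff, mem_filter, mem_univ, true_and]
  grind

theorem dupl_subset_img_univ : dupl δ w ⊆ img δ univ w := fun p hp => by
  rw [mem_img_univ_iff_card_fiber_pos]
  exact one_pos.trans ((mem_dupl_iff_one_lt_card_fiber δ w p).mp hp)

theorem card_img_univ_add_card_excl : #(img δ univ w) + #(excl δ w) = Fintype.card Q := by
  rw [excl, ← compl_eq_univ_sdiff, card_add_card_compl]

theorem card_img_univ_add_card_dupl_le : #(img δ univ w) + #(dupl δ w) ≤ Fintype.card Q := by
  have himg : img δ univ w = ({p | 0 < #{q | act δ q w = p}} : Finset Q) := by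
    ext p; simp [mem_img_univ_iff_card_fiber_pos]
  have hdupl : dupl δ w = ({p | 1 < #{q | act δ q w = p}} : Finset Q) := by
    ext p; simp [mem_dupl_iff_one_lt_card_fiber]
  have hfibers : Fintype.card Q = ∑ p, #{q | act δ q w = p} :=
    card_eq_sum_card_fiberwise fun q _ => mem_univ (act δ q w)
  rw [himg, hdupl, hfibers]
  exact card_filter_pos_add_card_filter_one_lt_le_sum _ _

theorem card_dupl_le_card_excl : #(dupl δ w) ≤ #(excl δ w) := by
  have := card_img_univ_add_card_excl δ w
  have := card_img_univ_add_card_dupl_le δ w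
  omega

theorem dupl_nonempty_of_excl_nonempty (h : (excl δ w).Nonempty) : (dupl δ w).Nonempty := by
  have hlt : #(img δ univ w) < #(univ : Finset Q) := by
    have := card_img_univ_add_card_excl δ w
    have := h.card_pos
    rw [card_univ]
    omega
  obtain ⟨q₁, -, q₂, -, hne, heq⟩ := exists_ne_map_eq_of_card_lt_of_maps_to hlt
    fun q _ => mem_image_of_mem (act δ · w) (mem_univ q)
  exact ⟨act δ q₁ w, (mem_dupl_iff_one_lt_card_fiber δ w _).mpr
    (one_lt_card_iff.mpr ⟨q₁, q₂, by simp, by simp [heq], hne⟩)⟩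

theorem excl_dupl_mem_exclDuplPairs (h : (excl δ w).Nonempty) :
    (excl δ w, dupl δ w) ∈
      exclDuplPairs #(excl δ w) (min #(excl δ w) (Fintype.card Q - #(excl δ w))) := by
  have hsub : dupl δ w ⊆ (excl δ w)ᶜ := by
    rw [excl, ← compl_eq_univ_sdiff, compl_compl]
    exact dupl_subset_img_univ δ w
  have := card_img_univ_add_card_excl δ w
  have := card_le_card (dupl_subset_img_univ δ w)
  rw [mem_exclDuplPairs]
  exact ⟨rfl, hsub, (dupl_nonempty_of_excl_nonempty δ w h).card_pos,
    le_min (card_dupl_le_card_excl δ w) (by omega)⟩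

theorem XD_subset_exclDuplPairs {k : ℕ} (hk : 1 ≤ k) :
    XD δ (A := A) k ⊆
      ↑(exclDuplPairs (α := Q) k (min k (Fintype.card Q - k))) := by
  rintro ⟨E, D⟩ ⟨w, rfl, rfl, rfl⟩
  exact excl_dupl_mem_exclDuplPairs δ w (card_pos.mp hk)

theorem ncard_XD_le {k : ℕ} (hk : 1 ≤ k) :
    (XD δ (A := A) k).ncard ≤
      (Fintype.card Q).choose k * ∑ d ∈ Icc 1 (min k (Fintype.card Q - k)),
        (Fintype.card Q - k).choose d := by
  rw [← card_exclDuplPairs, ← Set.ncard_coe_finset]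
  exact Set.ncard_le_ncard (XD_subset_exclDuplPairs δ hk) (finite_toSet _)

end Words

theorem XD_card_bounds_general {Q A : Type*} [Fintype Q] [DecidableEq Q]
    (δ : Q → A → Q) (n k : ℕ) (hn : n = Fintype.card Q) (hk1 : 1 ≤ k) (hkn : k < n) :
    (XD δ (A := A) k).ncard ≤
        n.choose k * ∑ d ∈ Finset.Icc 1 (min k (n - k)), (n - k).choose d ∧
    (n - k ≤ k → (XD δ (A := A) k).ncard < 2 ^ k * n.choose k) ∧
    (k < n - k → (XD δ (A := A) k).ncard < n.choose k ^ 2) := by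
  subst hn
  have hbound := ncard_XD_le δ (A := A) hk1
  have hchoose_pos := Nat.choose_pos hkn.le
  refine ⟨hbound, fun hle => ?_, fun hlt => ?_⟩
  · have hpow : 2 ^ (Fintype.card Q - k) - 1 < 2 ^ k := by
      have := Nat.pow_le_pow_right two_pos hle
      have := Nat.two_pow_pos (Fintype.card Q - k)
      omega
    rw [min_eq_right hle, Nat.sum_Icc_one_choose] at hbound
    calc _ ≤ _ := hbound
      _ < (Fintype.card Q).choose k * 2 ^ k := Nat.mul_lt_mul_of_pos_left hpow hchoose_pos
      _ = _ := mul_comm _ _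
  · have hsum := Nat.sum_Icc_one_choose_lt_add_choose (Fintype.card Q - k) k
    rw [Nat.sub_add_cancel hkn.le] at hsum
    rw [min_eq_left hlt.le] at hbound
    calc _ ≤ _ := hbound
      _ < (Fintype.card Q).choose k * (Fintype.card Q).choose k :=
        Nat.mul_lt_mul_of_pos_left hsum hchoose_pos
      _ = _ := (sq _).symm

/-- Bounds on the cardinality of XD_k(A) for a DFA with n states and 1 ≤ k < n. -/
theorem XD_card_bounds {Q A : Type*} [Fintype Q] [DecidableEq Q] [Fintype A]
    (δ : Q → A → Q) (n k : ℕ) (hn : n = Fintype.card Q) (hk1 : 1 ≤ k) (hkn : k < n) :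
    (XD δ (A := A) k).ncard ≤
        n.choose k * ∑ d ∈ Finset.Icc 1 (min k (n - k)), (n - k).choose d ∧
    (n - k ≤ k → (XD δ (A := A) k).ncard < 2 ^ k * n.choose k) ∧
    (k < n - k → (XD δ (A := A) k).ncard < n.choose k ^ 2) :=
  XD_card_bounds_general δ n k hn hk1 hkn
end

section
/- For all positive integers n and k with 1 ≤ k and k < n − k, one has Σ_{d=1}^{k} C(n−k, d) < C(n, k), where C(·,·) denotes the binomial coefficient. -/
/-! By Vandermonde, `C(m + k, k) = ∑_{d=0}^{k} C(m, d) C(k, k - d)`. Every factor `C(k, k - d)` is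
positive, and the `d = 0` term, which is missing on the left, equals `1`. -/

open Finset

theorem sum_Icc_choose_lt_add_choose (m k : ℕ) :
    ∑ d ∈ Icc 1 k, m.choose d < (m + k).choose k := by
  rw [Nat.add_choose_eq, Nat.sum_antidiagonal_eq_sum_range_succ_mk]
  calc ∑ d ∈ Icc 1 k, m.choose d
      ≤ ∑ d ∈ Icc 1 k, m.choose d * k.choose (k - d) :=
        sum_le_sum fun d _ => Nat.le_mul_of_pos_right _ (Nat.choose_pos (Nat.sub_le k d))
    _ < ∑ d ∈ range (k + 1), m.choose d * k.choose (k - d) :=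
        sum_lt_sum_of_subset (fun d hd => by simp only [mem_Icc, mem_range] at hd ⊢; omega)
          (mem_range.2 k.succ_pos) (by simp) (by simp) fun _ _ _ => Nat.zero_le _

theorem sum_choose_lt_choose_general (n k : ℕ) (hkn : k < n - k) :
    ∑ d ∈ Finset.Icc 1 k, (n - k).choose d < n.choose k := by
  have hn : n - k + k = n := Nat.sub_add_cancel (by omega)
  simpa only [hn] using sum_Icc_choose_lt_add_choose (n - k) k

/-- For 1 ≤ k and k < n − k, one has Σ_{d=1}^{k} C(n−k, d) < C(n, k). -/
theorem sum_choose_lt_choose (n k : ℕ) (hk : 1 ≤ k) (hkn : k < n - k) :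
    ∑ d ∈ Finset.Icc 1 k, (n - k).choose d < n.choose k :=
  sum_choose_lt_choose_general n k hkn
end

section
/- The 12-state two-letter DFA E₁₂ is completely reachable; moreover, for every word w over {a, b} of defect 1 with respect to E₁₂, the excluded state of w and the duplicate state of w have the same parity (both even or both odd), and hence the graph Γ₁(E₁₂) is not strongly connected. -/
open Finset

/-- The transition function of the DFA E₁₂: the letter `false` (= a) acts by the displayed
table and the letter `true` (= b) adds 1 modulo 12. -/
def e12δ (q : Fin 12) (x : Bool) : Fin 12 :=
  if x then q + 1
  else ![(10 : Fin 12), 1, 2, 8, 4, 3, 10, 9, 5, 7, 6, 11] q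

/-! ### Auxiliary definitions for complete reachability -/

def decode (m : ℕ) : Finset (Fin 12) := Finset.univ.filter (fun q => m.testBit q.val)

def wdec : ℕ → ℕ → List Bool
  | 0, _ => []
  | f+1, n => if n ≤ 1 then [] else decide (n % 2 = 1) :: wdec f (n / 2)

def chk : ℕ → List ℕ → Bool
  | _, [] => true
  | m, n :: t => decide (img e12δ Finset.univ (wdec 40 n) = decode m) && chk (m+1) t

def tbl0 : List Nat := [7964568282, 16554502874, 128281270, 33734372058, 131816106, 262498998, 8037738, 41250564826, 124300630, 266033834, 15553206, 530934454, 32860854, 16426346, 8238506, 109970041562, 1062951594, 258518358, 15418730, 534469290, 214601046, 32330422, 16159850, 1067805366, 7035562, 23812778, 1955242, 33203562, 16591658, 6149546, 4151126, 24070695642, 119233194, 379939510, 29715126, 526953814, 65908058, 32195946, 16091690, 1071340202, 59616602, 80564918, 1944150, 24861354, 16476970, 6122166, 2059626, 698047146, 123280042, 15424170, 1928022, 57367210, 26811050, 4052394, 2026198, 66757994, 15642986, 5860022, 3911386, 14538154, 8345130, 2610602, 1043178, 2595859162, 985246426, 40414550, 15248726, 391862954, 113937750, 5155162, 2009434, 136010410,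 3889834, 5051818, 1944922, 39398186, 16444122, 2561450, 8361386, 314157786, 112831194, 1268394, 481962, 87205226, 53695898, 4041302, 2019498, 19699114, 13347370, 317098, 1956698, 4924778, 8311478, 161450, 2078390, 10181290, 64182954, 5090650, 7693530, 32201386, 14228138, 4025174, 2011498, 20142762, 7779034, 5081898, 3889338, 5200554, 3611306, 2591530, 2090346, 19618474, 16210602, 1103530, 963290, 14248630, 8365418, 554666, 4062890, 5102166, 7370410, 550314, 4183146, 2611798, 1701226, 653014, 1045178, 6890826458, 111504054, 190536362, 64130390, 107523414, 13456054, 32025942, 4018870, 161176234, 15537578, 40200886, 3884394, 13543770, 1693098, 4106586, 513450, 404445866, 55741782, 8084138, 1927862, 13440426, 3360106, 4042074, 1010474, 38385066, 1665718, 5166762, 977626, 6755754, 846554, 2583382, 8266538, 194730666, 13151574, 11707754, 3714390, 3365546, 1682778, 1006250, 503130, 46773674, 416426, 11687466, 121514, 6215338, 1694554, 1553834, 514906, 53253546, 13283226, 23431722, 1882794, 841386, 420694, 4053850, 8097130, 13313386, 208214, 1464662, 977846, 423594, 850346, 4175542, 2082346, 26958506, 6646454, 40546202, 15380378, 9661226,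 3369770, 1288790, 502358, 4830634, 972458, 633178, 486230, 1207658, 2079402, 643242, 1027802, 9604438, 3312982, 634198, 240982, 1186474, 400042, 1291670, 505238, 1200554, 489130, 79274, 981418, 296618, 1039706, 80730, 1046874, 2545322, 6601386, 1272662, 1926362, 3200682, 1600342, 1299882, 1005754, 2540970, 484778, 635242, 242394, 1603242, 1805654, 381354, 2064298, 1275562, 1661850, 275882, 240822, 1083050, 839274, 277338, 1046698, 318890, 417142, 159450, 1899190, 544106, 212586, 327594, 261674, 15480761050, 56318634, 245721782, 15357482, 458971818, 262888106, 24814954, 8017450, 241741142, 28159322, 30233270, 3888822, 41638570, 14587306, 8213174, 2053814, 429611690, 111893162, 32314794, 1927722, 49980778, 53656246, 8078698, 1010218, 30320986, 6870698, 3790250, 3908310, 8300890, 3616106, 1037738, 2073302, 375958870, 119068330, 47010486, 1877354, 16472746, 16307882, 4025014, 1005910, 30217642, 7777622, 7554410, 486102, 8236378, 8153942, 2059050, 1019242, 47098202, 33385002, 3762870, 241002, 13555370, 8334698, 1562026, 1012922, 15144362, 1894746, 1895130, 1958826, 6777686, 8328746, 16655146, 2081898, 35347114, 56929622, 17673562,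 1906090, 28484970, 14232362, 5157226, 988586, 7559850, 7744854, 1265834, 1936170, 2054826, 3615530, 1027418, 1018666, 22239914, 7116202, 940714, 120490, 5724842, 1779050, 252586, 63146, 5559978, 1956438, 157098, 489174, 3650986, 1038934, 1039194, 259798, 20361946, 30620330, 5876310, 479402, 9902762, 8156842, 3979946, 1005750, 1889962, 1885610, 367274, 471402, 4951386, 1805658, 2592106, 2089770, 11426474, 7117658, 470358, 58794, 1431210, 1778474, 781018, 1046058, 947882, 236970, 315098, 118490, 2617770, 1044906, 654442, 261226, 60512938, 3319146, 15035062, 959850, 9657002, 6722666, 2579114, 2004074, 26438442, 6654506, 7564074, 1935914, 3385942, 846550, 1026646, 256726, 13219242, 3298858, 2021034, 505258, 1681754, 420394, 1010518, 126314, 3304810, 416086, 4176554, 1955802, 603562, 423098, 2076378, 1041322, 26381654, 1659574, 7507286, 479926, 1682774, 420650, 503126, 125738, 3283626, 208218, 924330, 60762, 3388822, 3378538, 388458, 1016666, 3297706, 824426, 1013418, 120502, 210346, 52586, 781014, 2024282, 820906, 52010, 2088282, 522026, 211802, 844634, 2095450, 260330, 6739626, 1684906, 5072090, 239962, 3369814,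 421226, 1289562, 250026, 1201846, 968106, 158294, 242026, 593258, 451946, 161174, 523946, 4421290, 414122, 1009066, 30122, 1683818, 100010, 504538, 31578, 299754, 122282, 39638, 61146, 150890, 901866, 1176762, 130986, 1202858, 415414, 318122, 59990, 800170, 200042, 387626, 62870, 592682, 199466, 91818, 121018, 801626, 451370, 194234, 261974, 843178, 103146, 552666, 15062, 421594, 50010, 390330, 499542, 150314, 99734, 474730, 122842, 302906, 106298, 81898, 32746, 11185793754]

def tbl1 : List Nat := [498707162, 123427498, 15371606, 174632278, 63606102, 32134698, 4016874, 328948394, 13327018, 20096362, 3888538, 5462698, 16420182, 1530538, 2052522, 510176598, 127577430, 12278442, 1907370, 21829034, 15947162, 6139226, 2020074, 108747434, 3910186, 31364522, 488810, 1365674, 4150682, 4150966, 4157098, 94067370, 124032426, 23423670, 7691162, 18045610, 7936682, 4024874, 1005738, 43158870, 15558506, 11701590, 1944270, 2731350, 2038442, 765270, 509610, 21607850, 15968810, 3069610, 3991722, 2730330, 1996138, 1534806, 998074, 5394858, 1955514, 1537706, 1042602, 341418, 521578, 1305302, 260794, 163162842, 62499546, 10136918, 3845462, 43691350, 28530074,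 1288746, 502314, 33249962, 7055914, 633562, 1952938, 8219318, 4111030, 640362, 2055446, 20556506, 7973594, 2568874, 996010, 2730714, 1993398, 1010390, 505018, 16624986, 3912890, 314198, 488234, 1362774, 2078106, 80726, 1033910, 10792278, 14980522, 2206426, 1927018, 7957174, 3569002, 503146, 251578, 12375722, 3528378, 1100330, 1965418, 3659178, 914794, 650026, 4178666, 1349034, 7980394, 1274666, 997930, 3992282, 998070, 277334, 498966, 674522, 3906838, 159338, 522986, 170714, 8367894, 768410, 261498, 102455978, 25520822, 124038486, 15383222, 51227994, 1682006, 4003242, 1000810, 40294058, 1944282, 10073514, 486070, 3037866, 3387098, 382634, 256730, 15948458, 3190102, 16133462, 953686, 3362986, 105130, 4033322, 2016662, 4151978, 1620650, 7809834, 244406, 681386, 846774, 2067242, 1033626, 23516842, 6644954, 5879210, 3846042, 1989290, 4010666, 251562, 125782, 14113450, 969258, 1462698, 60758, 514730, 2084182, 128682, 260522, 5396150, 1664218, 3065258, 482202, 419242, 209626, 766314, 249450, 1348330, 208054, 384426, 122230, 170710, 521002, 192218, 65130, 2403670, 830806, 10177878, 3886422, 4725418, 1579690, 80554, 31402, 300458,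 441002, 1247786, 485786, 301914, 912054, 20138, 256950, 3987114, 1743530, 3982762, 963350, 301738, 445782, 995690, 497846, 150234, 244566, 39642, 244122, 75434, 2079126, 40366, 2093462, 1227434, 830646, 365994, 484570, 994646, 3405994, 69290, 62170, 635562, 121194, 183002, 60598, 1510186, 457398, 34650, 1047318, 543450, 419690, 137946, 124778, 340138, 209846, 249562, 62390, 79722, 982762, 39862, 244686, 85178, 425754, 48054, 130842, 127621802, 31233450, 7513450, 1921450, 21932378, 15907510, 2008426, 1002218, 26434218, 15579818, 15111274, 1889002, 6773418, 3646826, 2602410, 512746, 59992874, 7808362, 15043114, 476842, 15952682, 7976346, 4033066, 252074, 7580246, 977066, 1895126, 244410, 685738, 2075342, 518870, 1037014, 29996458, 7493462, 7493162, 479978, 4118186, 8152490, 1029546, 251434, 3778906, 3682986, 944682, 235690, 2059094, 4116074, 257386, 254810, 5401962, 4173162, 940374, 235050, 1127850, 2092714, 3124954, 253230, 1345194, 473686, 947386, 243994, 342874, 1041130, 2089898, 260378, 40146346, 25990570, 3756726, 240346, 5483050, 6497642, 644794, 247146, 3779926, 3905882, 313898, 968090, 1027414, 1823414, 256810, 509334,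 7477930, 3738966, 470362, 117590, 1972906, 986454, 126298, 31574, 1232554, 976426, 39274, 61034, 282282, 456374, 327402, 516310, 7492010, 1784490, 1873002, 117290, 342698, 892250, 96938, 125718, 472490, 457386, 118122, 59066, 621914, 228698, 648026, 515898, 1869482, 446122, 117546, 14698, 85674, 223062, 1046314, 130794, 337578, 122090, 79674, 30522, 171438, 1832438, 163706, 65402, 15128234, 829786, 3782058, 939562, 5135018, 839850, 502106, 125482, 7564118, 242346, 945514, 121174, 776874, 1703594, 194218, 128186, 3298998, 398762, 2016682, 119210, 420438, 26282, 504170, 63162, 1641834, 244266, 646570, 122134, 423318, 456234, 323290, 260566, 12809898, 207446, 938410, 234602, 1301162, 210326, 62890, 15722, 3780970, 60586, 231082, 15146, 1028826, 456874, 64346, 514550, 824042, 102570, 253354, 29418, 105174, 13146, 126682, 63342, 413034, 26006, 1950442, 59286, 3273914, 204630, 262058, 32570, 3300010, 103850, 939702, 461354, 842410, 105306, 125526, 7850, 150230, 208602, 77994, 121014, 388442, 425898, 10074, 128478, 1641258, 51930, 461610, 15066, 222890, 55722, 252090, 15790, 74938, 30570, 19642, 15286, 37722, 228118, 80374, 262062,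 317802, 51926, 234218, 28842, 387670, 197466, 24234, 3930, 79450, 30298, 19862, 7574, 155478, 57174, 48558, 258042, 412458, 25786, 230806, 7354, 42842, 104950, 163434, 31222, 39866, 15290, 19934, 7646, 212970, 53242, 65514, 16378, 1522117338]

def tbl2 : List Nat := [31152810, 23637334, 7695030, 257645226, 131651242, 3058010, 4008746, 18569898, 15576410, 9284954, 3894058, 22616746, 8295850, 3060074, 2053674, 179940058, 125496026, 744106, 3861210, 53650794, 26815274, 3068074, 2020022, 13851306, 14036310, 1487578, 3730138, 3627690, 2073962, 1078954, 2066778, 68901546, 62304986, 2954666, 961878, 22620970, 28890794, 1512874, 2002266, 47397546, 16362070, 741546, 1841834, 12351146, 4090582, 1530198, 2037930, 11310506, 30874282, 186026, 506538, 2827626, 16666794, 95914, 253274, 3462826, 3458474, 91562, 1043126, 2827050, 4164138, 1570346, 260438, 47930026, 61561514, 11844266, 7649962, 56978102, 28490422, 3052950, 2004374, 18405034, 3724970, 1486166, 1862486, 8219178, 2043242, 321882, 2037290, 84710826, 51156394, 1453398, 929110, 21177706, 12789098, 383574, 252502, 5454506, 1865386, 312746, 2067798, 1813846, 2077974, 40362,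 258474, 10016426, 13784918, 1462442, 961718, 7263914, 15872682, 190810, 4126058, 4862634, 6828714, 185750, 3930282, 1300138, 7261802, 323946, 1045174, 5011114, 3357354, 181674, 1012442, 3634858, 2091354, 23978, 522794, 865706, 850602, 45782, 522934, 163242, 425306, 48046, 261398, 96053978, 13274454, 5942614, 3837270, 26914134, 3364250, 764458, 1004954, 23369130, 1645226, 2975594, 465578, 3385898, 423274, 382650, 128362, 12167898, 15686314, 1520298, 965302, 1682138, 420534, 767162, 505242, 2397610, 822614, 1522218, 3917210, 1688938, 211638, 761110, 2076438, 42767786, 3321174, 371418, 2005674, 6763178, 1690794, 378218, 511146, 2833066, 864938, 182826, 511318, 604842, 422698, 162474, 127786, 5836118, 3362134, 183126, 965018, 838486, 420250, 47958, 506262, 708266, 832278, 22890, 3917494, 151210, 211354, 196330, 1041174, 6067626, 3324598, 2996906, 1923994, 1516906, 1684890, 190634, 502478, 1202006, 1861034, 537258, 970346, 1027434, 519850, 80470, 254698, 12167514, 7288234, 760154, 482678, 593238, 200022, 189994, 252622, 380586, 1596314, 95146, 245354, 74154, 259926, 23786, 517038, 3446186, 1686186, 45738, 485226, 1306282, 843098,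 47658, 523626, 1461722, 432474, 11434, 242614, 309594, 801178, 23834, 257850, 1167018, 831386, 90842, 1012662, 188842, 105370, 5994, 261818, 432858, 403306, 5722, 491290, 75606, 53146, 3002, 130838, 5986986, 30987946, 2993498, 2004394, 24832730, 65828522, 4658602, 501098, 11973338, 15117654, 3779158, 944854, 5708458, 4083882, 2049386, 1018410, 11229866, 15674730, 579242, 470378, 9119082, 6707030, 292522, 505110, 7232170, 3289770, 1074602, 1960682, 906922, 518490, 518874, 1038298, 11754154, 16669354, 2984746, 240426, 3103402, 8008362, 1542954, 500522, 2938538, 1889686, 236202, 118106, 2854234, 4075882, 1543530, 509626, 3005014, 2086570, 288170, 126634, 1563222, 2082218, 390870, 63318, 368042, 1043286, 184026, 489706, 1569194, 520554, 392298, 260278, 5822122, 15496874, 2534742, 938154, 3091818, 3561302, 584026, 125274, 4086442, 1716906, 316822, 930154, 513706, 509354, 256854, 127338, 2913962, 14267050, 574890, 116138, 3559850, 1771866, 73130, 15786, 1039018, 466346, 78550, 233178, 259754, 64938, 80814, 32474, 2765482, 4184746, 578966, 120214, 775850, 2039210, 192874, 250262, 943530, 471766, 183642, 235706, 1814890, 1019610,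 511594, 261530, 728490, 1046186, 144086, 29398, 97706, 261546, 48858, 31662, 432854, 474030, 94186, 61418, 196314, 130778, 49078, 32694, 6597974, 1649450, 1157850, 469802, 6208182, 840374, 1164650, 250550, 5625530, 822618, 2148906, 232794, 211626, 105818, 64170, 32090, 824746, 206186, 750378, 120662, 3344938, 210198, 146262, 63158, 826202, 205610, 290410, 489814, 52906, 26454, 391866, 259574, 8181418, 415130, 576042, 120218, 1551702, 210330, 387882, 62874, 826026, 216234, 91834, 121238, 359770, 211350, 385882, 63894, 412378, 103094, 93802, 253358, 105178, 26294, 506266, 253134, 206506, 26010, 46906, 261018, 105902, 105678, 98170, 130166, 2812074, 415574, 144042, 234902, 890282, 210614, 97002, 31318, 1207978, 795434, 134314, 490906, 200362, 112986, 127706, 63674, 1684138, 199002, 252266, 58070, 301978, 25002, 18282, 7894, 151002, 245466, 67162, 61366, 37078, 50094, 48938, 65498, 1454762, 421546, 36010, 60110, 193962, 100022, 24250, 31438, 296346, 99738, 22958, 121310, 511706, 258026, 127926, 63966, 182122, 52698, 18010, 491194, 48854, 12502, 9146, 249774, 75162, 49870, 23546, 30710, 113590, 26574, 24470, 16374, 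10840758]

def tbl3 : List Nat := [31763798, 23768986, 3848886, 5466922, 7940906, 764502, 1004650, 4642474, 7449306, 2974938, 1947034, 4105578, 2042666, 765274, 513130, 5410134, 13407658, 372054, 3706198, 662186, 3351914, 767382, 1011162, 2324138, 3529302, 371894, 932534, 682838, 1036982, 1037034, 519642, 2733482, 30791354, 371034, 1924470, 683370, 3968346, 381098, 500566, 677558, 3467610, 92758, 973398, 331114, 1019226, 95638, 254806, 676266, 998058, 46506, 253270, 165546, 499034, 47962, 63274, 168682, 260778, 23254, 130390, 85354, 130394, 652474, 32554, 5421750, 3970474, 2972570, 1948330, 2565482, 992618, 321706, 125098, 2734762, 1763498, 78506, 974170, 2078122, 513878, 80426, 64234, 7973210, 6884694, 744822, 498010, 331094, 996630, 321066, 124458, 1355674, 932694, 156378, 932250, 170906, 259766, 10090, 129238, 677718, 3971930, 275114, 992982, 341686, 992042, 47702, 124010, 683690, 866902, 68778, 465818, 165558, 1827562, 40634, 128918, 337258, 249514, 90838, 62378, 41386, 124758, 11990, 15594, 85466, 220394, 34394, 233370, 20694, 1046006, 17338, 130702, 1355094, 6642586, 5983574, 8336810, 2628266, 1987994, 47786,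 125622, 1354934, 3721770, 628138, 232790, 1693370, 513434, 94938, 64182, 2792106, 3321754, 1487638, 1858458, 170666, 52566, 759990, 1008334, 681834, 416666, 190314, 466294, 518954, 105846, 95158, 516814, 169386, 1664874, 723498, 1002838, 170842, 1002666, 11946, 125338, 84694, 485050, 45226, 242454, 257370, 457450, 5978, 63898, 84698, 419034, 23258, 241562, 42666, 52406, 23982, 31642, 42170, 108394, 11450, 520982, 21338, 260502, 47606, 16282, 3033818, 1985242, 1486746, 962458, 758454, 496310, 23894, 15702, 866986, 220502, 39258, 121754, 75478, 114006, 5034, 32118, 996778, 498394, 981674, 468842, 85334, 124598, 124602, 62230, 149850, 208794, 47578, 61338, 9434, 455446, 2522, 260046, 336598, 992938, 22874, 124122, 42710, 124314, 2986, 15542, 216746, 54186, 5718, 30326, 38826, 200602, 1494, 64462, 84314, 107738, 47066, 31194, 5338, 26230, 1498, 7798, 10542, 27098, 2862, 245646, 2670, 212878, 750, 65422, 1496746, 15394986, 748374, 469546, 3127978, 1988438, 775594, 248554, 678570, 930474, 187050, 472250, 1026394, 911706, 256554, 63658, 751274, 4036010, 144810, 252250, 558762, 997046, 146266, 63018, 339286,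 490218, 290522, 245114, 456362, 114090, 259258, 64814, 1492394, 3659434, 373098, 230762, 714090, 3941162, 250282, 62570, 330538, 920746, 59050, 29526, 713514, 913770, 128698, 127406, 187818, 986794, 93914, 31658, 281962, 458154, 196522, 7914, 84778, 520922, 188378, 61306, 171834, 229082, 49130, 16278, 2693802, 7975594, 469590, 29354, 781994, 985434, 193898, 31274, 694618, 1038698, 19626, 512938, 128426, 212394, 32106, 16058, 642730, 1874842, 126122, 58074, 139690, 123306, 31530, 3946, 665450, 116586, 9818, 58294, 85914, 32470, 5050, 16238, 1319722, 937434, 233642, 7338, 178522, 851370, 62186, 15642, 165274, 460378, 29530, 14766, 257754, 257974, 96662, 127994, 336682, 233686, 58774, 3674, 42838, 246702, 81706, 1978, 42394, 245546, 39930, 15354, 42958, 262106, 24566, 16350, 703146, 824726, 234922, 58730, 564058, 105046, 36522, 62742, 186730, 232618, 93526, 58154, 256598, 227882, 16042, 8022, 281306, 51546, 72410, 115434, 209066, 6570, 73134, 31510, 145258, 122554, 72630, 61206, 26458, 13230, 97898, 130286, 373418, 207566, 117466, 29366, 985898, 105166, 18266, 7862, 46682, 121262, 11670, 7578, 89942,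 114362, 32174, 31950, 46954, 12886, 23478, 15834, 52410, 3286, 31670, 3958, 23482, 13006, 11742, 30606, 86010, 102318, 24570, 8142, 351574, 205526, 72026, 14682, 179542, 26326, 9130, 1962, 86954, 107434, 9814, 29078, 57002, 14250, 2518, 4014, 210522, 104410, 63066, 30682, 17626, 3290, 4570, 986, 18734, 26102, 4910, 7670, 4718, 7130, 1262, 260094, 172970, 103126, 18006, 3670, 22442, 49366, 4566, 982, 43478, 27094, 5838, 3790, 44974, 28590, 63990, 31998, 42486, 6446, 11766, 1838, 11226, 1646, 2286, 494, 21198, 13550, 5886, 3838, 43006, 26622, 12238, 8190, 3669600986]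

def tbl4 : List Nat := [61172406, 64707242, 3843434, 57191766, 7164598, 16083638, 4044202, 526080682, 7030122, 80383318, 7771242, 2841258, 906666, 8203050, 2053974, 52124330, 12937910, 32353626, 7703082, 26062170, 895574, 8088362, 1011050, 56171178, 879446, 10033834, 977622, 7254378, 1814234, 4150826, 518890, 448375514, 6860118, 46828886, 960858, 1792682, 896346, 8055514, 4167082, 45722330, 219818, 20141466, 970922, 4958762, 908122, 4117174, 1029814, 30628522, 3499226, 5839530, 962922, 3584730, 1792186, 1514154, 1041770, 7821994, 439002, 4171114, 1965738, 3176106, 2085994, 652650, 520890, 44395190, 30575958, 5067446, 1921718, 7148970, 1787242, 644522, 251306, 22187350, 879286, 1262954, 486186, 617142, 453338, 322266, 4072234, 4762966, 1617238, 634202, 240986, 154282, 55978, 645978, 252762, 4894618, 834218, 158550, 3902826, 77142, 453558, 326058, 1033770, 2452150, 6991770, 1272618, 240214, 448170, 224086, 1030826, 503514, 1215830, 109910, 137898, 243094, 226986, 457130, 515418, 522586, 2407082, 877786, 551766, 481466, 222634, 111322, 757078, 1015722, 613274, 109750, 314986, 522410, 154998, 850614, 81514, 130602, 22764202, 6968874,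 128670378, 3823146, 11382106, 1791670, 6198698, 1005238, 44784298, 879146, 20101814, 485930, 2676394, 1811158, 1518954, 1024726, 51959466, 828778, 7919274, 481622, 3583318, 223958, 3959638, 494954, 16607786, 109930, 4140394, 488634, 846170, 910250, 4134442, 1033322, 23375190, 857514, 5843754, 464298, 3550550, 887594, 1518378, 494378, 2921898, 54954, 730474, 30378, 907862, 227030, 514646, 128726, 13843114, 217258, 3962538, 481462, 837034, 209258, 757082, 1041194, 2923354, 26026, 729898, 521770, 105898, 52954, 520618, 130154, 1221994, 435562, 2528362, 955498, 2460202, 887338, 322262, 125654, 1201706, 243114, 158250, 60778, 153942, 907226, 160954, 517034, 610998, 217782, 158506, 60202, 77146, 27994, 1281386, 492378, 300138, 54966, 19818, 975706, 19242, 259882, 320346, 129258, 636330, 108890, 159082, 118954, 443818, 110954, 189802, 261802, 151978, 13738, 34474, 15194, 56746, 28378, 377578, 65450, 153270, 27222, 68970, 30102, 68394, 55482, 189226, 130902, 37610, 6870, 17242, 237398, 34198, 57306, 40762, 16362, 230271706, 6982998, 30051670, 1919722, 4938410, 1791386, 8031574, 1003946, 60468566, 858794, 7558554, 971498, 1813034,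 226666, 2053530, 2059946, 56923562, 3496858, 3742378, 481450, 7169898, 895694, 989866, 247466, 7580202, 1894570, 947562, 473786, 906938, 518314, 259434, 129722, 28945114, 1748310, 11752858, 240170, 2861610, 904362, 2013878, 1006870, 3779290, 471722, 944822, 242874, 1815738, 226090, 1029530, 509622, 6591914, 878442, 1471850, 120506, 1431226, 916842, 390506, 2081514, 3786090, 473642, 473782, 236822, 1809686, 260842, 4173590, 130426, 8743606, 6994614, 633430, 476522, 895706, 223926, 1289946, 125658, 1092950, 429398, 39594, 968086, 572074, 113334, 322486, 509338, 2450650, 1748890, 1913514, 60246, 444970, 27990, 1035606, 129450, 615642, 220058, 78554, 118378, 76982, 56694, 258858, 32362, 306518, 1789270, 531114, 15018, 178858, 223642, 387766, 125878, 694954, 439062, 183638, 235702, 113494, 113050, 1030550, 1044886, 306358, 222426, 1308842, 29402, 55658, 27830, 195254, 523030, 157546, 59242, 78774, 29622, 458474, 113614, 163610, 65306, 14456234, 872874, 7518902, 477930, 7191210, 840426, 1549674, 250602, 3614058, 214698, 3782042, 121002, 452778, 113338, 1026766, 512726, 3299158, 217834, 3958186, 120362, 1585834, 104618, 2018922, 123738,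 2076010, 103978, 1044138, 122158, 211542, 112922, 516842, 129306, 9213354, 109274, 2303338, 116074, 1808730, 443802, 774838, 247190, 1641814, 52054, 462166, 15190, 452138, 28266, 194230, 254166, 735914, 51754, 367962, 60182, 195242, 26298, 97626, 253754, 183978, 6506, 91990, 65258, 56554, 14138, 783862, 32634, 305498, 415274, 315562, 59946, 111274, 55638, 655018, 62650, 136618, 53674, 9898, 30394, 113194, 56598, 194090, 129494, 76374, 103530, 79254, 7530, 27818, 6954, 194730, 252406, 37034, 13034, 4954, 30574, 9622, 26518, 73558, 16186, 38314, 199210, 39770, 3754, 77530, 55478, 163754, 62942, 19162, 6874, 22954, 7598, 14186, 7094, 97046, 130990, 19158, 12458, 66394, 1882, 13914, 3478, 24406, 126970, 9402, 3258, 39414, 14838, 7098, 3550, 20474, 8186, 14375594]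

def tbl5 : List Nat := [3500726, 64542378, 1911594, 7187802, 1796906, 4101546, 1005098, 58387162, 1764058, 10038058, 971446, 5647702, 1632986, 1025386, 1018202, 28750554, 437590, 12113578, 953690, 7973462, 793258, 1993430, 989354, 14097066, 244394, 8278186, 122202, 1361322, 518838, 2066986, 129366, 28007082, 3455658, 11713206, 955798, 1627818, 813910, 994666, 988714, 17601962, 404822, 4400490, 121430, 816810, 1019222, 1029398, 127402, 5396310, 437430, 7484074, 2028906, 2634410, 1833130, 3067498, 520886, 1260202, 488154, 1042778, 260650, 326314, 260790, 163162, 130326, 4885846, 1740118, 1267098, 480666, 596650, 203434, 161130, 62826, 7297706, 441014, 158390, 243098, 298326, 1820058, 80566, 1027862, 1224022, 957098, 642218, 249002, 340650, 249174, 160554, 62250, 1264982, 440730, 158106, 244118, 307990, 1820342, 80282, 516886, 1227446, 875418, 636314, 240334, 812458, 446058, 257706, 123626, 3093930, 220534, 68950, 121550, 547738, 114282, 128854, 254894, 637610, 223082, 318810, 261482, 170330, 111542, 276890, 126778, 307098, 488374, 39834, 130746, 141162, 229146, 20378, 65302, 14210730, 955818, 32274090, 238954, 6729046, 420566, 1986730,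 494122, 7286122, 208234, 2512726, 242966, 1192618, 912106, 256346, 514010, 8280746, 109354, 3814058, 238378, 841110, 52570, 1978730, 247482, 1037994, 61098, 1033642, 30550, 518998, 227562, 258410, 129206, 7108266, 413866, 1464150, 59738, 668330, 405866, 247210, 61802, 5878442, 50602, 723290, 7594, 204202, 102106, 32170, 16090, 2087594, 54678, 990634, 119190, 209622, 104634, 495322, 130458, 521898, 13014, 130474, 15278, 211886, 28650, 65242, 16310, 600874, 207658, 316086, 119478, 298330, 101722, 40282, 15706, 75114, 55126, 79126, 30390, 74538, 227670, 10070, 128502, 152986, 54682, 79258, 30106, 85162, 55702, 80278, 31126, 37558, 122286, 9910, 122062, 9626, 129946, 40142, 64630, 153430, 103830, 79542, 14934, 271146, 228762, 47450, 30906, 67930, 25302, 8618, 3798, 114394, 28598, 17326, 32730, 159402, 27342, 34486, 15054, 34202, 55774, 126954, 31198, 19930, 229050, 4310, 118702, 17102, 14326, 10190, 8182, 14986582, 1751734, 3746602, 480362, 3255002, 898458, 994090, 250986, 5019050, 1609046, 1254762, 486874, 1432150, 408246, 512694, 257498, 14014138, 875894, 1871194, 238422, 1370458, 449110, 494938, 123734,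 473770, 122198, 236890, 30506, 129706, 64854, 64858, 16170, 1873322, 899754, 468330, 59562, 714922, 449882, 251734, 31466, 2690390, 235866, 472342, 58922, 408406, 407962, 128694, 63702, 1874778, 468694, 467754, 58474, 342614, 203674, 778986, 63382, 118442, 29610, 59222, 7402, 89322, 102298, 521718, 65166, 2448282, 4142506, 939418, 60086, 1624618, 101718, 251290, 31414, 1224602, 809882, 19798, 484046, 154522, 204150, 40310, 254670, 616298, 478550, 478378, 59802, 222906, 111382, 195306, 31130, 156890, 110490, 19638, 15258, 42858, 258838, 129430, 8090, 936666, 438170, 234166, 7510, 89430, 56218, 48470, 15734, 236250, 206698, 59062, 29462, 77722, 28570, 193302, 128974, 468650, 58586, 58778, 7350, 21418, 13942, 69530, 31694, 42202, 14810, 9846, 3702, 10714, 114574, 81806, 32654, 7006378, 207402, 939862, 117482, 406186, 210106, 387418, 30890, 1938858, 121178, 472758, 30250, 228074, 114042, 48554, 32046, 1562282, 99690, 1844010, 29802, 396458, 13142, 389482, 61870, 462506, 15274, 196010, 3818, 258778, 28538, 98010, 8086, 3781290, 12970, 461146, 14890, 514410, 250794, 81322, 7866, 826266, 25306, 57770,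 1898, 51050, 25526, 16086, 8046, 413146, 3242, 327082, 7450, 198234, 6574, 126902, 62458, 102614, 1626, 115630, 954, 114474, 7162, 131034, 8158, 300438, 25962, 39510, 29974, 101546, 25386, 96810, 3926, 18778, 49898, 2474, 15126, 57018, 28438, 5038, 64750, 76494, 12982, 39630, 3766, 55726, 3482, 48826, 15566, 4694, 7642, 1238, 1910, 4814, 14222, 36782, 4046, 74454, 6490, 9942, 938, 41898, 12694, 6058, 1966, 38874, 14298, 1242, 474, 9718, 3574, 3034, 129022, 37590, 1622, 16598, 470, 10710, 1742, 12206, 15614, 2350, 814, 622, 238, 5358, 1790, 10238, 4094, 27617974]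

def tbl6 : List Nat := [1746282, 2970294, 1947050, 2835818, 3576938, 382378, 1005398, 4549302, 3508778, 371286, 486762, 355158, 453334, 765658, 256746, 2665814, 436570, 372058, 2069930, 88746, 446634, 383834, 505526, 1402074, 438634, 743610, 517482, 176858, 917162, 1037418, 258746, 13798742, 873142, 738666, 120234, 354998, 224042, 191194, 1975082, 568662, 109914, 23210, 121690, 309930, 1805674, 191414, 509482, 2797466, 109142, 93014, 241370, 44374, 112022, 194986, 260442, 353498, 219322, 45786, 491434, 44214, 260266, 326326, 65066, 2774570, 1725994, 743094, 480950, 354858, 223786, 762582, 500438, 304490, 219478, 92886, 232810, 44394, 226490, 385962, 509034, 333226, 202154, 363306, 232234, 22186, 13994, 95958, 63190, 86186, 219318, 78186, 516906, 9642, 259626, 20186, 64618, 173418, 431210, 363050, 60118, 112042, 28010, 382938, 254890, 86710, 27434, 11610, 230234, 22198, 451418, 128810, 63722, 43354, 53418, 45418, 130730, 5546, 7002, 11994, 32682, 10838, 13718, 22714, 65366, 2774, 106326, 24538, 8170, 2788694, 871146, 742810, 479658, 334506, 447210, 95594, 1011370, 1399706, 219306, 371406, 116394, 845994, 211642, 256170,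 64186, 699734, 109098, 380074, 482582, 209578, 111802, 95018, 247478, 354154, 54970, 392554, 1032938, 211498, 105750, 129770, 64890, 2800310, 214378, 92854, 60122, 167254, 443798, 47798, 247194, 700314, 27478, 11606, 63914, 88986, 52842, 23926, 15978, 740694, 6826, 92570, 60342, 176918, 104630, 47514, 520598, 91354, 13018, 11446, 260886, 26474, 13238, 48078, 32538, 348586, 215786, 316138, 119530, 83626, 55466, 47802, 250582, 86762, 54826, 39082, 58202, 38442, 56622, 47386, 63770, 43738, 50538, 181658, 116118, 19286, 6998, 11882, 123094, 18986, 27414, 9914, 122682, 2410, 32490, 5946, 16250, 153130, 27178, 22870, 29882, 20906, 14010, 23830, 63958, 37994, 3434, 2858, 121334, 4842, 14190, 10134, 7994, 68138, 1706, 22710, 30174, 2778, 3502, 2998, 65454, 4266, 858, 1430, 61434, 1210, 6646, 1502, 4090, 1403574, 863018, 748330, 480810, 715482, 447158, 584410, 493914, 175446, 429402, 268970, 465066, 113322, 56666, 256694, 63830, 1358506, 431510, 289622, 464426, 142678, 55894, 494934, 61866, 175286, 980330, 784554, 258742, 226010, 129578, 129718, 64790, 691542, 218522, 72362, 30058, 178870,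 112026, 771482, 503574, 432810, 117930, 118102, 29482, 178586, 113046, 771766, 254742, 351130, 109262, 183914, 58090, 89462, 56014, 48746, 123822, 92010, 130410, 46006, 61242, 226230, 65210, 98074, 32534, 431530, 107882, 158422, 231978, 77162, 111894, 387818, 251866, 43818, 107306, 19802, 116410, 28330, 14166, 96490, 63670, 151722, 26970, 143722, 29034, 17834, 3498, 36570, 7898, 21910, 53654, 39098, 64922, 4822, 7086, 12266, 8118, 76586, 53942, 36186, 7514, 22358, 14006, 96598, 62966, 21914, 13722, 22934, 14742, 56750, 56526, 64410, 31862, 38294, 6742, 97690, 14522, 8918, 1750, 12214, 16346, 10958, 6862, 23006, 14814, 97978, 53166, 6134, 4086, 703158, 218218, 374170, 119914, 560470, 224730, 146102, 126426, 351606, 107350, 186966, 58198, 56662, 14122, 32086, 7978, 375466, 26794, 187738, 15082, 104794, 26154, 145818, 30934, 206550, 25706, 72602, 30614, 13226, 3306, 36762, 32398, 2045354, 27318, 36182, 15030, 285594, 221902, 73078, 123598, 216406, 27034, 45846, 14746, 44954, 7066, 127766, 3994, 176026, 3414, 23450, 7542, 75626, 13078, 12186, 63438, 25818, 3254, 5750,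 15310, 6618, 1654, 49038, 16270, 76330, 51946, 79034, 14506, 55642, 13866, 48506, 15662, 34154, 13418, 4950, 29102, 7082, 1770, 12154, 3990, 4778, 6698, 119722, 3770, 8922, 874, 9142, 3950, 1194, 3354, 2478, 29690, 602, 442, 3066, 4062, 9578, 13590, 9002, 1878, 17130, 6934, 12054, 31982, 4790, 1718, 1434, 7374, 3546, 886, 6030, 1998, 2394, 426, 4502, 942, 6106, 218, 1526, 63486, 598, 214, 718, 7422, 302, 110, 766, 2046, 697706]

def tbl7 : List Nat := [898474, 1479786, 481110, 1411626, 224618, 191190, 125674, 174426, 1021354, 184490, 243382, 176490, 255338, 392874, 127674, 348854, 54698, 92970, 926506, 44378, 56154, 757098, 247338, 43606, 110298, 46486, 129370, 88250, 229290, 129194, 32298, 677418, 218806, 92714, 238294, 88406, 101738, 95418, 246890, 71082, 101162, 5802, 30422, 88246, 254762, 128554, 31850, 169066, 27350, 11626, 123818, 11050, 99162, 189274, 30954, 20650, 65194, 2906, 16298, 5526, 32598, 40790, 4074, 346858, 217514, 185066, 487082, 88234, 50858, 80570, 31418, 43562, 220438, 46266, 116406, 22202, 508650, 40214, 32122, 83306,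 27354, 181654, 116122, 11094, 31146, 20074, 7786, 2730, 27574, 39094, 258454, 4826, 129814, 5046, 16154, 84714, 53994, 22698, 119510, 22058, 25434, 23854, 31002, 17770, 50582, 2902, 57558, 11030, 57146, 16106, 8058, 10794, 13498, 5818, 31190, 1386, 55798, 5998, 3898, 682, 13790, 1454, 32686, 346, 28666, 2550, 2042, 338730, 218666, 185014, 231770, 167258, 202922, 23898, 31062, 169366, 202282, 23126, 29098, 456042, 127670, 64042, 32022, 87450, 13674, 46490, 241430, 52394, 13098, 47510, 123670, 43726, 25322, 23246, 58286, 64874, 28474, 32442, 16150, 42346, 100906, 46358, 120794, 41770, 50874, 5974, 30902, 10586, 12650, 1450, 3802, 20886, 32154, 2990, 4022, 21174, 3418, 5814, 30198, 5530, 6550, 23758, 15478, 2646, 6330, 726, 8154, 2766, 6622, 20398, 2038, 87146, 54378, 93658, 60890, 41814, 25430, 5930, 3882, 10410, 6890, 9770, 14550, 9322, 14230, 1258, 16014, 10934, 6838, 90830, 58062, 10650, 6554, 2970, 1946, 1366, 3446, 4886, 30670, 1206, 7118, 630, 8078, 19178, 6314, 5674, 7470, 5226, 12718, 746, 1942, 2602,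 1722, 362, 1902, 1306, 13306, 186, 2014, 5398, 854, 2838, 15598, 694, 3278, 374, 974, 170, 430, 90, 30718, 86, 3326, 46, 1022, 374186, 218966, 93546, 60138, 497066, 112310, 124266, 62138, 21930, 402218, 23386, 116266, 44762, 63834, 98218, 15914, 87734, 107222, 36202, 115818, 35626, 14038, 123690, 15466, 10966, 58282, 33626, 14570, 32426, 8106, 16214, 2026, 86442, 224938, 18090, 15034, 89366, 50870, 246506, 15738, 10970, 50586, 14762, 3690, 11190, 127382, 64278, 7962, 21226, 53974, 9050, 14618, 17814, 24790, 24378, 3962, 5306, 14806, 23030, 1850, 5598, 16302, 12282, 1018, 87594, 100698, 71850, 14678, 71210, 12714, 62134, 15638, 5482, 110358, 4906, 58134, 8938, 25518, 12090, 7958, 35370, 55258, 18106, 14518, 4458, 1754, 15770, 1974, 1370, 13814, 2454, 7286, 2234, 4058, 2526, 1014, 21610, 28122, 9046, 1834, 2794, 6358, 6038, 7822, 2742, 25294, 2458, 922, 1398, 14286, 3022, 3982, 2218, 3374, 4526, 918, 698, 878, 5114, 990, 342, 7406, 1230, 462, 174, 14334, 1278, 510, 87894, 27370, 46774, 29370,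 140074, 50730, 31066, 7722, 41686, 50282, 5846, 7274, 25514, 6378, 4010, 1002, 93866, 6842, 18102, 7546, 17818, 1642, 61846, 3866, 21206, 6426, 8406, 1914, 6614, 826, 8110, 506, 35162, 6486, 4522, 7446, 44822, 25366, 9134, 3862, 22490, 6326, 730, 950, 5622, 3190, 2010, 502, 11738, 810, 2262, 3726, 8910, 410, 6094, 1934, 1326, 406, 366, 478, 3310, 206, 6142, 254, 10986, 12986, 17962, 3626, 17514, 3178, 2282, 490, 2746, 3450, 618, 1818, 2330, 890, 314, 250, 2390, 3350, 8982, 1814, 2230, 438, 1142, 246, 298, 1678, 154, 910, 150, 222, 78, 126, 4794, 1578, 1130, 234, 1402, 794, 378, 122, 1302, 790, 182, 118, 654, 398, 94, 62, 554, 106, 282, 58, 278, 54, 142, 30, 42, 26, 22, 14, 10, 6, 2, 1]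

def tbl : List Nat := tbl0 ++ tbl1 ++ tbl2 ++ tbl3 ++ tbl4 ++ tbl5 ++ tbl6 ++ tbl7

lemma chk_append (s t : List ℕ) (m : ℕ) :
    chk m (s ++ t) = (chk m s && chk (m + s.length) t) := by
  induction s generalizing m with
  | nil => simp [chk]
  | cons n s ih =>
    have e : m + (s.length + 1) = m + 1 + s.length := by omega
    rw [List.cons_append, List.length_cons, e]
    simp only [chk, ih (m+1), Bool.and_assoc]

lemma chk_spec : ∀ (t : List ℕ) (m i : ℕ), chk m t = true → i < t.length →
    img e12δ Finset.univ (wdec 40 (t.getD i 0)) = decode (m + i) := by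
  intro t
  induction t with
  | nil => intro m i _ hi; simp at hi
  | cons n t ih =>
    intro m i h hi
    rw [chk, Bool.and_eq_true, decide_eq_true_eq] at h
    cases i with
    | zero => simpa using h.1
    | succ j =>
      have := ih (m+1) j h.2 (by simpa using hi)
      rw [show m + 1 + j = m + (j+1) by omega] at this
      simpa using this

set_option maxRecDepth 1000000 in
set_option maxHeartbeats 4000000 in
lemma chk0 : chk 1 tbl0 = true := by decide
set_option maxRecDepth 1000000 in
set_option maxHeartbeats 4000000 in
lemma chk1 : chk 513 tbl1 = true := by decide
set_option maxRecDepth 1000000 in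
set_option maxHeartbeats 4000000 in
lemma chk2 : chk 1025 tbl2 = true := by decide
set_option maxRecDepth 1000000 in
set_option maxHeartbeats 4000000 in
lemma chk3 : chk 1537 tbl3 = true := by decide
set_option maxRecDepth 1000000 in
set_option maxHeartbeats 4000000 in
lemma chk4 : chk 2049 tbl4 = true := by decide
set_option maxRecDepth 1000000 in
set_option maxHeartbeats 4000000 in
lemma chk5 : chk 2561 tbl5 = true := by decide
set_option maxRecDepth 1000000 in
set_option maxHeartbeats 4000000 in
lemma chk6 : chk 3073 tbl6 = true := by decide
set_option maxRecDepth 1000000 in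
set_option maxHeartbeats 4000000 in
lemma chk7 : chk 3585 tbl7 = true := by decide

set_option maxRecDepth 100000 in
lemma len0 : tbl0.length = 512 := by decide
set_option maxRecDepth 100000 in
lemma len1 : tbl1.length = 512 := by decide
set_option maxRecDepth 100000 in
lemma len2 : tbl2.length = 512 := by decide
set_option maxRecDepth 100000 in
lemma len3 : tbl3.length = 512 := by decide
set_option maxRecDepth 100000 in
lemma len4 : tbl4.length = 512 := by decide
set_option maxRecDepth 100000 in
lemma len5 : tbl5.length = 512 := by decide
set_option maxRecDepth 100000 in
lemma len6 : tbl6.length = 512 := by decide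
set_option maxRecDepth 100000 in
lemma len7 : tbl7.length = 511 := by decide

lemma tbl_len : tbl.length = 4095 := by
  simp [tbl, List.length_append, len0, len1, len2, len3, len4, len5, len6, len7]

lemma chk_tbl : chk 1 tbl = true := by
  simp only [tbl, chk_append, List.length_append,
    len0, len1, len2, len3, len4, len5, len6, len7, Bool.and_eq_true]
  norm_num [chk0, chk1, chk2, chk3, chk4, chk5, chk6, chk7]

def decode' (m : Fin 4096) : Finset (Fin 12) := decode m.val

lemma decode'_inj : Function.Injective decode' := by
  intro m m' h
  have hb : ∀ j : Fin 12, m.val.testBit j.val = m'.val.testBit j.val := by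
    intro j
    have h2 := Finset.ext_iff.mp h j
    simp only [decode', decode, Finset.mem_filter, Finset.mem_univ, true_and] at h2
    cases hm1 : m.val.testBit j.val <;> cases hm2 : m'.val.testBit j.val <;> simp_all
  apply Fin.ext
  apply Nat.eq_of_testBit_eq
  intro i
  by_cases hi : i < 12
  · exact hb ⟨i, hi⟩
  · have h12 : (4096:ℕ) ≤ 2^i := by
      calc (4096:ℕ) = 2^12 := by norm_num
      _ ≤ 2^i := Nat.pow_le_pow_right (by norm_num) (by omega)
    rw [Nat.testBit_lt_two_pow (lt_of_lt_of_le m.isLt h12),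
        Nat.testBit_lt_two_pow (lt_of_lt_of_le m'.isLt h12)]

lemma decode'_surj : Function.Surjective decode' :=
  ((Fintype.bijective_iff_injective_and_card decode').mpr
    ⟨decode'_inj, by rw [Fintype.card_finset, Fintype.card_fin, Fintype.card_fin]; norm_num⟩).surjective

lemma part1 : CompletelyReachable e12δ := by
  intro P hP
  obtain ⟨m, hm⟩ := decode'_surj P
  have hm0 : m.val ≠ 0 := by
    intro h0
    have h1 : decode' m = ∅ := by
      rw [decode', h0]
      simp [decode, Nat.zero_testBit]
    rw [hm] at h1
    exact hP.ne_empty h1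
  have hi : m.val - 1 < tbl.length := by rw [tbl_len]; omega
  have hs := chk_spec tbl 1 (m.val - 1) chk_tbl hi
  rw [show 1 + (m.val - 1) = m.val by omega] at hs
  exact ⟨_, by rw [hs]; exact hm⟩

/-! ### Auxiliary definitions for the parity invariant -/

def S : Finset (Fin 12 × Fin 12) := {(0,4), (0,6), (0,10), (1,5), (1,7), (1,11), (2,0), (2,6), (2,8), (3,1), (3,7), (3,9), (4,2), (4,8), (4,10), (5,3), (5,9), (5,11), (6,0), (6,4), (6,10), (7,1), (7,5), (7,11), (8,0), (8,2), (8,6), (9,1), (9,3), (9,7), (10,2), (10,4), (10,8), (11,3), (11,5), (11,9)}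

def InjF (p : Fin 12) (x : Bool) : Prop :=
  ∀ s₁ ∈ ({p}ᶜ : Finset (Fin 12)), ∀ s₂ ∈ ({p}ᶜ : Finset (Fin 12)),
    e12δ s₁ x = e12δ s₂ x → s₁ = s₂

instance (p : Fin 12) (x : Bool) : Decidable (InjF p x) := by
  unfold InjF; infer_instance

lemma act_append (q : Fin 12) (w : List Bool) (x : Bool) :
    act e12δ q (w ++ [x]) = e12δ (act e12δ q w) x := by
  simp [act]

lemma act_singleton (q : Fin 12) (x : Bool) : act e12δ q [x] = e12δ q x := rfl

lemma img_append_s11 (P : Finset (Fin 12)) (w : List Bool) (x : Bool) :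
    img e12δ P (w ++ [x]) = (img e12δ P w).image (fun s => e12δ s x) := by
  simp only [img, Finset.image_image, Function.comp_def, act_append]

lemma mem_dupl {w : List Bool} {p : Fin 12} :
    p ∈ dupl e12δ w ↔ ∃ q₁ q₂ : Fin 12, q₁ ≠ q₂ ∧ act e12δ q₁ w = p ∧ act e12δ q₂ w = p := by
  simp [dupl]

lemma surj_of_img_univ {w : List Bool} (h : img e12δ Finset.univ w = Finset.univ) :
    Function.Surjective (fun q => act e12δ q w) := by
  intro y
  have hy : y ∈ img e12δ Finset.univ w := by rw [h]; exact Finset.mem_univ y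
  rw [img, Finset.mem_image] at hy
  obtain ⟨q, _, hq⟩ := hy
  exact ⟨q, hq⟩

lemma dupl_perm {w : List Bool} (h : img e12δ Finset.univ w = Finset.univ) (x : Bool) :
    dupl e12δ (w ++ [x]) = dupl e12δ [x] := by
  have hsurj := surj_of_img_univ h
  have hinj : Function.Injective (fun q => act e12δ q w) :=
    Finite.injective_iff_surjective.mpr hsurj
  ext p
  simp only [mem_dupl, act_append, act_singleton]
  constructor
  · rintro ⟨q₁, q₂, hne, h1, h2⟩
    exact ⟨act e12δ q₁ w, act e12δ q₂ w, fun hh => hne (hinj hh), h1, h2⟩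
  · rintro ⟨s₁, s₂, hne, h1, h2⟩
    obtain ⟨q₁, hq₁⟩ := hsurj s₁
    obtain ⟨q₂, hq₂⟩ := hsurj s₂
    simp only at hq₁ hq₂
    refine ⟨q₁, q₂, fun hh => hne (by rw [← hq₁, ← hq₂, hh]), ?_, ?_⟩
    · rw [hq₁]; exact h1
    · rw [hq₂]; exact h2

lemma dupl_step {w : List Bool} {x : Bool} {p q : Fin 12}
    (himg : img e12δ Finset.univ w = {p}ᶜ) (hdup : dupl e12δ w = {q}) (hinj : InjF p x) :
    dupl e12δ (w ++ [x]) = {e12δ q x} := by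
  have himg' : Finset.univ.image (fun q : Fin 12 => act e12δ q w) = {p}ᶜ := himg
  ext r
  simp only [mem_dupl, act_append, Finset.mem_singleton]
  constructor
  · rintro ⟨q₁, q₂, hne, h1, h2⟩
    have m1 : act e12δ q₁ w ∈ ({p}ᶜ : Finset (Fin 12)) := by
      rw [← himg']; exact Finset.mem_image_of_mem _ (Finset.mem_univ q₁)
    have m2 : act e12δ q₂ w ∈ ({p}ᶜ : Finset (Fin 12)) := by
      rw [← himg']; exact Finset.mem_image_of_mem _ (Finset.mem_univ q₂)
    by_cases heq : act e12δ q₁ w = act e12δ q₂ w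
    · have hq : act e12δ q₁ w ∈ dupl e12δ w := mem_dupl.mpr ⟨q₁, q₂, hne, rfl, heq.symm⟩
      rw [hdup, Finset.mem_singleton] at hq
      rw [← h1, hq]
    · exact absurd (hinj _ m1 _ m2 (h1.trans h2.symm)) heq
  · rintro rfl
    have hq : q ∈ dupl e12δ w := by rw [hdup]; exact Finset.mem_singleton_self q
    obtain ⟨q₁, q₂, hne, h1, h2⟩ := mem_dupl.mp hq
    exact ⟨q₁, q₂, hne, by rw [h1], by rw [h2]⟩

set_option maxRecDepth 1000000 in
set_option maxHeartbeats 20000000 in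
lemma stepS : ∀ p q : Fin 12, (p, q) ∈ S → ∀ x : Bool,
    (InjF p x → ∃ p' : Fin 12, (p', e12δ q x) ∈ S ∧
      ({p}ᶜ : Finset (Fin 12)).image (fun s => e12δ s x) = {p'}ᶜ) ∧
    (¬ InjF p x → (({p}ᶜ : Finset (Fin 12)).image (fun s => e12δ s x)).card ≤ 10) := by
  decide

lemma baseA : Finset.univ.image (fun s : Fin 12 => e12δ s true) = Finset.univ := by decide

lemma baseB : Finset.univ.image (fun s : Fin 12 => e12δ s false) = ({0}ᶜ : Finset (Fin 12)) := by
  decide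

lemma duplA : dupl e12δ [false] = {(10 : Fin 12)} := by decide

lemma base_mem : ((0:Fin 12), (10:Fin 12)) ∈ S := by decide

lemma inv : ∀ w : List Bool,
    img e12δ Finset.univ w = Finset.univ ∨
    (∃ p q : Fin 12, (p, q) ∈ S ∧ img e12δ Finset.univ w = {p}ᶜ ∧ dupl e12δ w = {q}) ∨
    (img e12δ Finset.univ w).card ≤ 10 := by
  intro w
  induction w using List.reverseRecOn with
  | nil => left; simp [img, act]
  | append_singleton ws x ih =>
    rcases ih with h | ⟨p, q, hS, hi, hd⟩ | h
    · cases x with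
      | true => left; rw [img_append_s11, h, baseA]
      | false =>
        right; left
        exact ⟨0, 10, base_mem, by rw [img_append_s11, h, baseB],
          by rw [dupl_perm h, duplA]⟩
    · by_cases hinj : InjF p x
      · obtain ⟨p', hS', himg'⟩ := (stepS p q hS x).1 hinj
        right; left
        exact ⟨p', e12δ q x, hS', by rw [img_append_s11, hi, himg'], dupl_step hi hd hinj⟩
      · right; right
        rw [img_append_s11, hi]
        exact (stepS p q hS x).2 hinj
    · right; right
      rw [img_append_s11]
      exact le_trans Finset.card_image_le h

lemma Sparity : ∀ p q : Fin 12, (p, q) ∈ S → p.val % 2 = q.val % 2 := by decide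

lemma part2 : ∀ (w : List Bool) (p q : Fin 12), excl e12δ w = {p} → dupl e12δ w = {q} →
    p.val % 2 = q.val % 2 := by
  intro w p q he hd
  rcases inv w with h | ⟨p₀, q₀, hS, hi, hdup⟩ | h
  · rw [excl, h, Finset.sdiff_self] at he
    exact absurd he.symm (Finset.singleton_ne_empty p)
  · have he' : excl e12δ w = {p₀} := by
      rw [excl, hi, ← Finset.compl_eq_univ_sdiff, compl_compl]
    rw [he] at he'
    have hq' : ({q} : Finset (Fin 12)) = {q₀} := by rw [← hd, hdup]
    obtain rfl := Finset.singleton_injective he'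
    obtain rfl := Finset.singleton_injective hq'
    exact Sparity _ _ hS
  · exfalso
    have hc := congrArg Finset.card he
    rw [excl, Finset.card_sdiff_of_subset (Finset.subset_univ _)] at hc
    simp [Finset.card_univ] at hc
    omega

/-- E₁₂ is completely reachable; every word of defect 1 has excluded and duplicate states of
the same parity; hence Γ₁(E₁₂) is not strongly connected. -/
theorem e12_completelyReachable_gamma1_not_stronglyConnected :
    CompletelyReachable e12δ ∧
    (∀ (w : List Bool) (p q : Fin 12), excl e12δ w = {p} → dupl e12δ w = {q} →
      p.val % 2 = q.val % 2) ∧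
    ¬ (∀ p q : Fin 12, Relation.ReflTransGen
        (fun p q => ∃ w : List Bool, excl e12δ w = {p} ∧ dupl e12δ w = {q}) p q) := by
  refine ⟨part1, part2, ?_⟩
  intro h
  have key : ∀ p q : Fin 12, Relation.ReflTransGen
      (fun p q => ∃ w : List Bool, excl e12δ w = {p} ∧ dupl e12δ w = {q}) p q →
      p.val % 2 = q.val % 2 := by
    intro p q hpq
    induction hpq with
    | refl => rfl
    | tail _ hstep ih =>
      obtain ⟨w, he, hd⟩ := hstep
      exact ih.trans (part2 w _ _ he hd)
  have h01 := key 0 1 (h 0 1)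
  simp at h01
end

section
/- Let A = ⟨Q, {a, b}⟩ be a completely reachable DFA with two input letters in which the letter b acts as a permutation of Q. Then b acts as a cyclic permutation of Q, i.e., for all p, q ∈ Q there exists m ≥ 0 such that p·bᵐ = q. -/
open Finset

/-- In a completely reachable DFA with two input letters in which the letter b (= `true`)
acts as a permutation, b acts as a cyclic permutation. -/
theorem permutation_letter_is_cyclic {Q : Type*} [Fintype Q] [DecidableEq Q]
    (δ : Q → Bool → Q) (h : CompletelyReachable δ)
    (hb : Function.Bijective (fun q => δ q true)) :
    ∀ p q : Q, ∃ m : ℕ, act δ p (List.replicate m true) = q := by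
  classical
  set σ : Equiv.Perm Q := Equiv.ofBijective _ hb with hσ
  have hσapp : ∀ x : Q, σ x = δ x true := fun x => rfl
  -- act by replicate m true is σ ^ m
  have hact : ∀ (m : ℕ) (p : Q), act δ p (List.replicate m true) = (σ ^ m) p := by
    intro m
    induction m with
    | zero => intro p; simp [act]
    | succ n ih =>
      intro p
      rw [List.replicate_succ]
      show act δ (δ p true) (List.replicate n true) = _
      rw [ih, pow_succ, Equiv.Perm.mul_apply, hσapp]
  -- appending a letter to a word
  have himg_append : ∀ (w : List Bool) (c : Bool) (P : Finset Q),
      img δ P (w ++ [c]) = (img δ P w).image (fun q => δ q c) := by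
    intro w c P
    simp only [img, act, List.foldl_append, Finset.image_image]
    rfl
  have himg_nil : ∀ P : Finset Q, img δ P ([] : List Bool) = P := by
    intro P; simp [img, act]
  -- p = q case if Q is trivial
  by_cases htriv : ∀ x y : Q, x = y
  · intro p q; exact ⟨0, by simpa [act] using htriv p q⟩
  push_neg at htriv
  obtain ⟨x, y, hxy⟩ := htriv
  -- the letter false is not surjective
  have hexe : ∃ e : Q, e ∉ Finset.univ.image (fun q => δ q false) := by
    by_contra hc
    push_neg at hc
    have hfull : ∀ w : List Bool, img δ Finset.univ w = Finset.univ := by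
      intro w
      induction w using List.reverseRecOn with
      | nil => exact himg_nil _
      | append_singleton w c ih =>
        rw [himg_append, ih]
        cases c with
        | false =>
          apply Finset.eq_univ_of_forall
          intro q
          exact hc q
        | true =>
          apply Finset.eq_univ_of_forall
          intro q
          obtain ⟨p, hp⟩ := hb.2 q
          exact Finset.mem_image.mpr ⟨p, Finset.mem_univ p, hp⟩
    obtain ⟨w, hw⟩ := h {x} ⟨x, Finset.mem_singleton_self x⟩
    rw [hfull w] at hw
    exact hxy (by
      have hx' : x ∈ ({x} : Finset Q) := Finset.mem_singleton_self x
      have hy' : y ∈ ({x} : Finset Q) := hw ▸ Finset.mem_univ y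
      rw [Finset.mem_singleton] at hy'
      rw [hy'])
  obtain ⟨e, he⟩ := hexe
  -- key: every non-full image misses some σ^k e
  have key : ∀ w : List Bool,
      img δ Finset.univ w = Finset.univ ∨ ∃ k, (σ ^ k) e ∉ img δ Finset.univ w := by
    intro w
    induction w using List.reverseRecOn with
    | nil => left; exact himg_nil _
    | append_singleton w c ih =>
      rw [himg_append]
      cases c with
      | false =>
        right
        refine ⟨0, fun hmem => he ?_⟩
        simp only [pow_zero, Equiv.Perm.coe_one, id_eq] at hmem
        obtain ⟨z, _, hz⟩ := Finset.mem_image.mp hmem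
        exact Finset.mem_image.mpr ⟨z, Finset.mem_univ z, hz⟩
      | true =>
        rcases ih with hfull | ⟨k, hk⟩
        · left
          rw [hfull]
          apply Finset.eq_univ_of_forall
          intro q
          obtain ⟨p, hp⟩ := hb.2 q
          exact Finset.mem_image.mpr ⟨p, Finset.mem_univ p, hp⟩
        · right
          refine ⟨k + 1, fun hmem => hk ?_⟩
          obtain ⟨z, hzmem, hz⟩ := Finset.mem_image.mp hmem
          have : σ ((σ ^ k) e) = σ z := by
            calc σ ((σ ^ k) e) = (σ ^ (k + 1)) e := by rw [pow_succ']; rfl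
              _ = δ z true := hz.symm
              _ = σ z := (hσapp z).symm
          have hze : (σ ^ k) e = z := σ.injective this
          rwa [hze]
  -- the orbit of e covers Q
  have orbit : ∀ q : Q, ∃ k, (σ ^ k) e = q := by
    intro q
    have hne : (Finset.univ \ {q} : Finset Q).Nonempty := by
      rcases eq_or_ne x q with rfl | hx
      · exact ⟨y, by simp [Ne.symm hxy]⟩
      · exact ⟨x, by simp [hx]⟩
    obtain ⟨w, hw⟩ := h (Finset.univ \ {q}) hne
    rcases key w with hfull | ⟨k, hk⟩
    · rw [hfull] at hw
      have : q ∈ (Finset.univ \ {q} : Finset Q) := hw ▸ Finset.mem_univ q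
      simp at this
    · rw [hw] at hk
      refine ⟨k, ?_⟩
      by_contra hne'
      exact hk (Finset.mem_sdiff.mpr ⟨Finset.mem_univ _, by simpa using hne'⟩)
  -- conclude cyclicity
  intro p q
  obtain ⟨j, hj⟩ := orbit p
  obtain ⟨k, hk⟩ := orbit q
  have hN : 0 < orderOf σ := orderOf_pos σ
  set N := orderOf σ
  refine ⟨k + j * (N - 1), ?_⟩
  rw [hact, ← hj, ← hk]
  have harith : k + j * (N - 1) + j = k + j * N := by
    have h1 : N - 1 + 1 = N := Nat.succ_pred_eq_of_pos hN
    calc k + j * (N - 1) + j = k + j * (N - 1 + 1) := by ring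
      _ = k + j * N := by rw [h1]
  rw [← Equiv.Perm.mul_apply, ← pow_add, harith, pow_add, mul_comm j N, pow_mul,
    pow_orderOf_eq_one, one_pow, mul_one]
end

section
/- For the Černý automaton C_n with n ≥ 2, for every i ∈ {0, …, n−1} and every j ∈ {0, …, n−2}, the word (ab)ʲ a bⁱ has defect 1 with excluded state i and duplicate state (i+j+1) mod n. Consequently, the graph Γ₁(C_n) contains every edge (p, q) with p ≠ q, and in particular Γ₁(C_n) is strongly connected. -/
open Finset

/-- The word (ab)ʲ a bⁱ over the alphabet of C_n, with a = `false`, b = `true`,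
applied left to right. -/
def cernyWord (j i : ℕ) : List Bool :=
  (List.replicate j [false, true]).flatten ++ [false] ++ List.replicate i true

/-!
Since (ab)ʲa = a(ba)ʲ, the word (ab)ʲ a bⁱ acts as a, then (ba)ʲ, then bⁱ. The letter a merges
0 and 1 and otherwise fixes states, landing in {1, …, n−1}; on that set ba is the cycle
1 ↦ 2 ↦ ⋯ ↦ n−1 ↦ 1, and bⁱ is a rotation of all states. So the word merges exactly the pair
{0, 1}, is injective elsewhere, and misses bⁱ(0) = i: it has defect one, with duplicate state
bⁱ((ba)ʲ 1) = i + j + 1 (mod n). Every pair p ≠ q is of the form (i, i + j + 1 mod n) with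
j ≤ n − 2.
-/

open Function

section Words

variable {Q A : Type*} (δ : Q → A → Q)

lemma act_cons (q : Q) (x : A) (w : List A) : act δ q (x :: w) = act δ (δ q x) w := rfl

lemma act_append_s19 (q : Q) (u v : List A) : act δ q (u ++ v) = act δ (act δ q u) v :=
  List.foldl_append

lemma act_replicate (q : Q) (x : A) (k : ℕ) :
    act δ q (List.replicate k x) = (δ · x)^[k] q := by
  induction k generalizing q with
  | zero => rfl
  | succ k ih => rw [List.replicate_succ, iterate_succ_apply, ← ih]; rfl

lemma act_replicate_flatten (q : Q) (u : List A) (k : ℕ) :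
    act δ q (List.replicate k u).flatten = (act δ · u)^[k] q := by
  induction k generalizing q with
  | zero => rfl
  | succ k ih => rw [List.replicate_succ, List.flatten_cons, act_append_s19, ih, iterate_succ_apply]

end Words

/-- The image of the word is that of `{z₁}ᶜ`, of size `|Q| - 1`, so `e` is the only missing state. -/
theorem excl_eq_singleton_and_dupl_eq_singleton {Q A : Type*} [Fintype Q] [DecidableEq Q]
    {δ : Q → A → Q} {w : List A} {z₁ z₂ e : Q} (hz : z₁ ≠ z₂)
    (hmerge : act δ z₁ w = act δ z₂ w) (hinj : Set.InjOn (act δ · w) {z₁}ᶜ)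
    (he : ∀ q, act δ q w ≠ e) :
    excl δ w = {e} ∧ dupl δ w = {act δ z₁ w} := by
  have himg : img δ univ w = (univ.erase z₁).image (act δ · w) := by
    refine le_antisymm (fun p hp => ?_) (image_subset_image (erase_subset _ _))
    obtain ⟨q, -, rfl⟩ := mem_image.1 hp
    by_cases hq : q = z₁
    · exact mem_image.2 ⟨z₂, mem_erase.2 ⟨hz.symm, mem_univ _⟩, by rw [hq, hmerge]⟩
    · exact mem_image.2 ⟨q, mem_erase.2 ⟨hq, mem_univ _⟩, rfl⟩
  have hcard : #(img δ univ w) = Fintype.card Q - 1 := by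
    rw [himg, card_image_of_injOn (by rwa [coe_erase, coe_univ, ← Set.compl_eq_univ_sdiff]),
      card_erase_of_mem (mem_univ _), card_univ]
  constructor
  · refine eq_of_superset_of_card_ge ?_ ?_
    · exact singleton_subset_iff.2 (show e ∈ excl δ w by simpa [excl, img] using he)
    · rw [excl, card_sdiff_of_subset (subset_univ _), hcard, card_univ, card_singleton]
      omega
  · ext p
    simp only [dupl, mem_filter, mem_univ, true_and, mem_singleton]
    constructor
    · rintro ⟨q₁, q₂, hne, rfl, h⟩
      by_contra hp
      have h₁ : q₁ ≠ z₁ := fun h' => hp (h' ▸ rfl)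
      have h₂ : q₂ ≠ z₁ := fun h' => hp (h' ▸ h.symm)
      exact hne (hinj h₁ h₂ h.symm)
    · rintro rfl
      exact ⟨z₁, z₂, hz, rfl, hmerge.symm⟩

lemma flatten_replicate_pair_append {α : Type*} (x y : α) (k : ℕ) :
    (List.replicate k [x, y]).flatten ++ [x] = x :: (List.replicate k [y, x]).flatten := by
  induction k with
  | zero => rfl
  | succ k ih => simp [List.replicate_succ, ih]

lemma act_cernyWord {Q : Type*} (δ : Q → Bool → Q) (q : Q) (j i : ℕ) :
    act δ q (cernyWord j i) = (δ · true)^[i] ((act δ · [true, false])^[j] (δ q false)) := by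
  rw [cernyWord, flatten_replicate_pair_append, act_append_s19, act_replicate, act_cons,
    act_replicate_flatten]

section Cerny

variable {n : ℕ} (hn : 2 ≤ n)

lemma val_cernyδ_false (q : Fin n) :
    (cernyδ n hn q false).val = if q.val = 0 then 1 else q.val := by
  unfold cernyδ
  split_ifs <;> simp_all

lemma val_cernyδ_true (q : Fin n) : (cernyδ n hn q true).val = (q.val + 1) % n := rfl

lemma val_cernyδ_false_ne_zero (q : Fin n) : (cernyδ n hn q false).val ≠ 0 := by
  rw [val_cernyδ_false]
  split_ifs <;> omega

lemma injOn_cernyδ_false {k : ℕ} (hk : k ≤ 1) :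
    Set.InjOn (cernyδ n hn · false) {q | q.val ≠ k} := by
  intro x (hx : x.val ≠ k) y (hy : y.val ≠ k) h
  have h' := congrArg Fin.val h
  simp only [val_cernyδ_false] at h'
  exact Fin.ext (by split_ifs at h' <;> omega)

lemma val_cernyδ_true_ne_one {q : Fin n} (hq : q.val ≠ 0) : (cernyδ n hn q true).val ≠ 1 := by
  rw [val_cernyδ_true]
  rcases (show q.val + 1 < n ∨ q.val + 1 = n by omega) with h | h
  · rw [Nat.mod_eq_of_lt h]
    omega
  · rw [h, Nat.mod_self]
    omega

lemma val_iterate_cernyδ_true (q : Fin n) (i : ℕ) :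
    ((cernyδ n hn · true)^[i] q).val = (q.val + i) % n := by
  induction i with
  | zero => exact (Nat.mod_eq_of_lt q.2).symm
  | succ i ih => rw [iterate_succ_apply', val_cernyδ_true, ih, Nat.mod_add_mod, add_assoc]

lemma injective_iterate_cernyδ_true (i : ℕ) : Injective (cernyδ n hn · true)^[i] := by
  intro x y h
  have h' := congrArg Fin.val h
  rw [val_iterate_cernyδ_true, val_iterate_cernyδ_true] at h'
  exact Fin.ext ((Nat.ModEq.add_right_cancel' i h').eq_of_lt_of_lt x.2 y.2)

lemma iterate_cernyδ_true_zero (i : Fin n) : (cernyδ n hn · true)^[i] ⟨0, by omega⟩ = i :=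
  Fin.ext (by rw [val_iterate_cernyδ_true, zero_add, Nat.mod_eq_of_lt i.2])

lemma injOn_act_cernyδ_true_false :
    Set.InjOn (act (cernyδ n hn) · [true, false]) {q | q.val ≠ 0} :=
  (injOn_cernyδ_false hn le_rfl).comp (injective_iterate_cernyδ_true hn 1).injOn
    fun _ hq => val_cernyδ_true_ne_one hn hq

lemma val_iterate_act_cernyδ_true_false_one (j : ℕ) (hj : j + 1 < n) :
    ((act (cernyδ n hn) · [true, false])^[j] ⟨1, by omega⟩).val = j + 1 := by
  induction j with
  | zero => rfl
  | succ j ih =>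
    rw [iterate_succ_apply', act_cons, act_cons, act, List.foldl_nil, val_cernyδ_false,
      val_cernyδ_true, ih (by omega), Nat.mod_eq_of_lt hj, if_neg (by omega)]

theorem cernyWord_defect_one (i : Fin n) (j : ℕ) (hj : j ≤ n - 2) :
    excl (cernyδ n hn) (cernyWord j i.val) = {i} ∧
      dupl (cernyδ n hn) (cernyWord j i.val) =
        {⟨(i.val + j + 1) % n, Nat.mod_lt _ (by omega)⟩} := by
  have ha : Set.MapsTo (cernyδ n hn · false) {q | q.val ≠ 0} {q | q.val ≠ 0} :=
    fun q _ => val_cernyδ_false_ne_zero hn q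
  have hba : Set.MapsTo (act (cernyδ n hn) · [true, false]) {q | q.val ≠ 0} {q | q.val ≠ 0} :=
    fun q _ => val_cernyδ_false_ne_zero hn _
  have hmerge : act (cernyδ n hn) ⟨0, by omega⟩ (cernyWord j i.val) =
      act (cernyδ n hn) ⟨1, by omega⟩ (cernyWord j i.val) := by
    rw [act_cernyWord, act_cernyWord]
    rfl
  have hinj : Set.InjOn (act (cernyδ n hn) · (cernyWord j i.val)) {⟨0, by omega⟩}ᶜ := by
    simp only [act_cernyWord]
    refine (injective_iterate_cernyδ_true hn i).comp_injOn
      (((injOn_act_cernyδ_true_false hn).iterate hba j).comp (injOn_cernyδ_false hn zero_le_one)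
        ha) |>.mono fun q (hq : q ≠ ⟨0, _⟩) h0 => hq (Fin.ext h0)
  have he : ∀ q, act (cernyδ n hn) q (cernyWord j i.val) ≠ i := by
    intro q h
    rw [act_cernyWord] at h
    exact hba.iterate j (val_cernyδ_false_ne_zero hn q) <| congrArg Fin.val <|
      injective_iterate_cernyδ_true hn i (h.trans (iterate_cernyδ_true_zero hn i).symm)
  obtain ⟨hexcl, hdupl⟩ := excl_eq_singleton_and_dupl_eq_singleton
    (Fin.ne_of_val_ne zero_ne_one) hmerge hinj he
  refine ⟨hexcl, hdupl.trans (congrArg _ (Fin.ext ?_))⟩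
  rw [act_cernyWord, val_iterate_cernyδ_true]
  change ((act (cernyδ n hn) · [true, false])^[j] ⟨1, by omega⟩ + i.val) % n = _
  rw [val_iterate_act_cernyδ_true_false_one hn j (by omega),
    show j + 1 + i.val = i.val + j + 1 by omega]

end Cerny

lemma exists_add_succ_mod_eq_of_ne {n : ℕ} {p q : Fin n} (hpq : p ≠ q) :
    ∃ j ≤ n - 2, (p.val + j + 1) % n = q.val := by
  rcases Nat.lt_or_gt_of_ne (Fin.val_ne_of_ne hpq) with h | h
  · refine ⟨q.val - p.val - 1, by omega, ?_⟩
    rw [show p.val + (q.val - p.val - 1) + 1 = q.val by omega, Nat.mod_eq_of_lt q.2]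
  · refine ⟨q.val + n - p.val - 1, by omega, ?_⟩
    rw [show p.val + (q.val + n - p.val - 1) + 1 = q.val + n by omega, Nat.add_mod_right,
      Nat.mod_eq_of_lt q.2]

/-- In C_n, the word (ab)ʲ a bⁱ has defect 1 with excluded state i and duplicate state
(i+j+1) mod n; hence Γ₁(C_n) contains all edges (p, q) with p ≠ q and is strongly
connected. -/
theorem cerny_gamma1_complete (n : ℕ) (hn : 2 ≤ n) :
    (∀ (i : Fin n) (j : ℕ), j ≤ n - 2 →
      excl (cernyδ n hn) (cernyWord j i.val) = {i} ∧
      dupl (cernyδ n hn) (cernyWord j i.val) =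
        {⟨(i.val + j + 1) % n, Nat.mod_lt _ (by omega)⟩}) ∧
    (∀ p q : Fin n, p ≠ q →
      ∃ w : List Bool, excl (cernyδ n hn) w = {p} ∧ dupl (cernyδ n hn) w = {q}) ∧
    (∀ p q : Fin n, Relation.ReflTransGen
      (fun p q => ∃ w : List Bool, excl (cernyδ n hn) w = {p} ∧ dupl (cernyδ n hn) w = {q})
      p q) := by
  have hedge : ∀ p q : Fin n, p ≠ q →
      ∃ w : List Bool, excl (cernyδ n hn) w = {p} ∧ dupl (cernyδ n hn) w = {q} := by
    intro p q hpq
    obtain ⟨j, hj, hjq⟩ := exists_add_succ_mod_eq_of_ne hpq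
    obtain ⟨hexcl, hdupl⟩ := cernyWord_defect_one hn p j hj
    exact ⟨cernyWord j p.val, hexcl, hdupl.trans (congrArg _ (Fin.ext hjq))⟩
  refine ⟨cernyWord_defect_one hn, hedge, fun p q => ?_⟩
  by_cases hpq : p = q
  · exact hpq ▸ .refl
  · exact .single (hedge p q hpq)
end
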